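/- arXiv:2001.02626 — 4 statements merged into one kernel-verified Lean document; each statement's English description precedes it below -/
import Mathlib

section
/- In a triangulation with a fixed z-orientation, at every vertex the number of type II edges directed into the vertex equals the number of type II edges directed out of it; hence the subgraph of type II edges with their τ-induced directions is an Eulerian digraph (every vertex has equal in-degree and out-degree). -/
open scoped Classical

noncomputable section

/-- An abstract (combinatorial) triangulation of a closed surface:
finitely many vertices, edges and faces; every edge has two endpoints,
every face has three sides, and every edge lies on exactly two faces. -/
structure Triang where
  V : Type
  E : Type
  F : Type
  [fV : Fintype V]
  [fE : Fintype E]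
  [fF : Fintype F]
  [dV : DecidableEq V]
  [dE : DecidableEq E]
  [dF : DecidableEq F]
  ends : E → Finset V
  ends_card : ∀ e, (ends e).card = 2
  sides : F → Finset E
  sides_card : ∀ f, (sides f).card = 3
  two_faces : ∀ e, (Finset.univ.filter fun f => e ∈ sides f).card = 2

attribute [instance] Triang.fV Triang.fE Triang.fF Triang.dV Triang.dE Triang.dF

/-- A zigzag, presented as a periodic bi-infinite sequence of directed edge
traversals (edge, tail, head) together with the face carrying each
consecutive pair, of minimal period `n`. -/
structure Zigzag (T : Triang) where
  n : ℕ
  npos : 0 < n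
  edge : ℤ → T.E
  tail : ℤ → T.V
  head : ℤ → T.V
  face : ℤ → T.F
  per_edge : ∀ i, edge (i + n) = edge i
  per_tail : ∀ i, tail (i + n) = tail i
  per_head : ∀ i, head (i + n) = head i
  per_face : ∀ i, face (i + n) = face i
  mem_tail : ∀ i, tail i ∈ T.ends (edge i)
  mem_head : ∀ i, head i ∈ T.ends (edge i)
  tail_ne_head : ∀ i, tail i ≠ head i
  link : ∀ i, head i = tail (i + 1)
  edge_mem : ∀ i, edge i ∈ T.sides (face i)
  edge_succ_mem : ∀ i, edge (i + 1) ∈ T.sides (face i)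
  edge_ne_succ : ∀ i, edge i ≠ edge (i + 1)
  face_ne_succ : ∀ i, face i ≠ face (i + 1)
  disjoint_two : ∀ i, T.ends (edge i) ∩ T.ends (edge (i + 2)) = ∅
  minimal : ∀ m : ℕ, 0 < m → (∀ i, edge (i + m) = edge i) → n ≤ m

variable {T : Triang}

/-- Number of occurrences of an edge in one period of a zigzag. -/
def Zigzag.count (Z : Zigzag T) (e : T.E) : ℕ :=
  ((Finset.range Z.n).filter fun i => Z.edge i = e).card

/-- Two zigzags are equal as cyclic sequences (equal up to a shift). -/
def CyclicEq (Z Z' : Zigzag T) : Prop :=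
  ∃ k : ℤ, (∀ i, Z'.edge i = Z.edge (i + k)) ∧ (∀ i, Z'.tail i = Z.tail (i + k)) ∧
    (∀ i, Z'.head i = Z.head (i + k))

/-- `Z'` is the reversal of `Z` (as cyclic sequences, i.e. up to a shift). -/
def IsReversal (Z Z' : Zigzag T) : Prop :=
  ∃ k : ℤ, (∀ i, Z'.edge i = Z.edge (k - i)) ∧ (∀ i, Z'.tail i = Z.head (k - i)) ∧
    (∀ i, Z'.head i = Z.tail (k - i))

/-- A z-orientation: a collection of zigzags which double covers the edges
(each edge is traversed exactly twice in total). -/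
structure ZOrientation (T : Triang) where
  zz : List (Zigzag T)
  covers : ∀ e : T.E, (zz.map fun Z => Z.count e).sum = 2

/-- The multiset of directed traversals of an edge by the zigzags of `τ`. -/
def ZOrientation.travs (τ : ZOrientation T) (e : T.E) : Multiset (T.V × T.V) :=
  (τ.zz.map fun Z =>
    Multiset.ofList
      (((List.range Z.n).filter fun i => Z.edge i = e).map
        fun i => (Z.tail i, Z.head i))).sum

/-- Type II edge: the two traversals from `τ` go in the same direction. -/
def ZOrientation.TypeII (τ : ZOrientation T) (e : T.E) : Prop :=
  ∃ v w : T.V, τ.travs e = {(v, w), (v, w)}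

/-- Type I edge: the two traversals from `τ` go in different directions. -/
def ZOrientation.TypeI (τ : ZOrientation T) (e : T.E) : Prop :=
  ∃ v w : T.V, τ.travs e = {(v, w), (w, v)} ∧ v ≠ w

/-- The direction of a type II edge: both traversals go from `v` to `w`. -/
def ZOrientation.DirII (τ : ZOrientation T) (e : T.E) (v w : T.V) : Prop :=
  τ.travs e = {(v, w), (v, w)}

/-- Face of type I: exactly one side of type II (and every side has a type). -/
def ZOrientation.FaceTypeI (τ : ZOrientation T) (f : T.F) : Prop :=
  ((T.sides f).filter fun e => τ.TypeII e).card = 1 ∧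
    ∀ e ∈ T.sides f, τ.TypeI e ∨ τ.TypeII e

/-- Face of type II: all three sides of type II. -/
def ZOrientation.FaceTypeII (τ : ZOrientation T) (f : T.F) : Prop :=
  ∀ e ∈ T.sides f, τ.TypeII e

/-- Vertex of type I: incident only to edges of type I. -/
def ZOrientation.VertexTypeI (τ : ZOrientation T) (v : T.V) : Prop :=
  ∀ e : T.E, v ∈ T.ends e → τ.TypeI e

/-- A zigzag is homogeneous: after each type II edge there follow exactly
two type I edges before the next type II edge, and type II edges occur. -/
def ZOrientation.Homogeneous (τ : ZOrientation T) (Z : Zigzag T) : Prop :=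
  (∃ i : ℤ, τ.TypeII (Z.edge i)) ∧
    ∀ i : ℤ, τ.TypeII (Z.edge i) →
      τ.TypeI (Z.edge (i + 1)) ∧ τ.TypeI (Z.edge (i + 2)) ∧ τ.TypeII (Z.edge (i + 3))

/-- Vertices of a face. -/
def faceVerts (T : Triang) (f : T.F) : Finset T.V :=
  (T.sides f).biUnion T.ends

/-- The edges of the link cycle `C(v)`: in each face containing `v`,
the edge opposite to `v`. -/
def oppEdges (T : Triang) (v : T.V) : Finset T.E :=
  Finset.univ.filter fun e =>
    ∃ f : T.F, e ∈ T.sides f ∧ v ∈ faceVerts T f ∧ v ∉ T.ends e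

/-- A finite edge set forms a single directed cycle with respect to the
τ-directions of its (type II) edges. -/
def ZOrientation.IsDirCycle (τ : ZOrientation T) (S : Finset T.E) : Prop :=
  ∃ (m : ℕ) (c : ℤ → T.E) (w : ℤ → T.V), 0 < m ∧
    (∀ i, c (i + m) = c i) ∧ (∀ i, w (i + m) = w i) ∧
    (∀ i j : ℤ, 0 ≤ i → i < j → j < m → c i ≠ c j) ∧
    (∀ e ∈ S, ∃ i : ℤ, c i = e) ∧ (∀ i, c i ∈ S) ∧
    (∀ i, τ.DirII (c i) (w i) (w (i + 1)))


section Aux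

lemma mem_listSum {α : Type} {l : List (Multiset α)} {a : α} :
    a ∈ l.sum ↔ ∃ m ∈ l, a ∈ m := by
  induction l with
  | nil => simp
  | cons h t ih => simp [List.sum_cons, ih]

lemma countP_listSum {α : Type} (q : α → Prop) [DecidablePred q] (l : List (Multiset α)) :
    Multiset.countP q l.sum = (l.map (Multiset.countP q)).sum := by
  induction l with
  | nil => simp
  | cons h t ih => simp [List.sum_cons, Multiset.countP_add, ih]

lemma card_listSum {α : Type} (l : List (Multiset α)) :
    Multiset.card l.sum = (l.map Multiset.card).sum := by
  induction l with
  | nil => simp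
  | cons h t ih => simp [List.sum_cons, ih]

lemma finsum_listSum {α β : Type} [Fintype β] (l : List α) (h : α → β → ℕ) :
    ∑ b : β, (l.map (fun a => h a b)).sum = (l.map (fun a => ∑ b : β, h a b)).sum := by
  induction l with
  | nil => simp
  | cons x t ih => simp [List.sum_cons, Finset.sum_add_distrib, ih]

/-- Elements of `τ.travs e` are genuine traversals of `e`. -/
lemma mem_travs {τ : ZOrientation T} {e : T.E} {p : T.V × T.V} (hp : p ∈ τ.travs e) :
    p.1 ∈ T.ends e ∧ p.2 ∈ T.ends e ∧ p.1 ≠ p.2 := by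
  rw [ZOrientation.travs, mem_listSum] at hp
  obtain ⟨m, hm, hpm⟩ := hp
  rw [List.mem_map] at hm
  obtain ⟨Z, _, rfl⟩ := hm
  rw [Multiset.mem_coe, List.mem_map] at hpm
  obtain ⟨i, hi, rfl⟩ := hpm
  rw [List.mem_filter] at hi
  have he : Z.edge (i : ℤ) = e := by simpa using hi.2
  exact ⟨he ▸ Z.mem_tail i, he ▸ Z.mem_head i, Z.tail_ne_head i⟩

lemma countP_ofList_eq {n : ℕ} (ed : ℕ → T.E) (e : T.E) (tr : ℕ → T.V × T.V)
    (q : T.V × T.V → Prop) [DecidablePred q] :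
    Multiset.countP q (Multiset.ofList (((List.range n).filter fun i => ed i = e).map
        fun i => tr i))
      = ((Finset.range n).filter fun i => q (tr i) ∧ ed i = e).card := by
  have h : Multiset.ofList (((List.range n).filter fun i => ed i = e).map fun i => tr i)
      = ((Finset.range n).val.filter fun i => ed i = e).map fun i => tr i := by
    simp [Finset.range, Multiset.range]
  rw [h, Multiset.countP_map, Multiset.filter_filter, Finset.card_def, Finset.filter_val]

/-- `countP` of `travs` as a sum over zigzags of counts of positions. -/
lemma countP_travs (τ : ZOrientation T) (e : T.E) (q : T.V × T.V → Prop) [DecidablePred q] :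
    Multiset.countP q (τ.travs e) =
      (τ.zz.map fun Z =>
        ((Finset.range Z.n).filter fun i : ℕ =>
          q (Z.tail i, Z.head i) ∧ Z.edge i = e).card).sum := by
  rw [ZOrientation.travs, countP_listSum, List.map_map]
  refine congrArg List.sum (List.map_congr_left fun Z _ => ?_)
  exact countP_ofList_eq (fun i : ℕ => Z.edge i) e (fun i : ℕ => (Z.tail i, Z.head i)) q

lemma mem_bindRange {n : ℕ} {x : ℤ} :
    (x ∈ (do let a ← Finset.range n; pure (↑a : ℤ))) ↔ ∃ i ∈ Finset.range n, (i : ℤ) = x := by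
  have h := congrFun (congrFun (Finset.bind_def (α := ℤ) (β := ℕ)) (Finset.range n))
    (fun (a : ℕ) => (pure (a : ℤ) : Finset ℤ))
  rw [h]
  simp [Finset.mem_sup, Pure.pure]

lemma count_eq_natFilter (Z : Zigzag T) (e : T.E) :
    Z.count e = ((Finset.range Z.n).filter fun i : ℕ => Z.edge i = e).card := by
  rw [Zigzag.count]
  apply Finset.card_nbij (i := fun i : ℤ => i.toNat)
  · intro a ha
    have ha : a ∈ ((do let a ← Finset.range Z.n; pure (↑a : ℤ)) : Finset ℤ).filter (fun i => Z.edge i = e) := ha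
    simp only [Finset.mem_filter] at ha ⊢
    obtain ⟨ha1, ha2⟩ := ha
    obtain ⟨i, hi, rfl⟩ := mem_bindRange.mp ha1
    simpa [Finset.mem_range.mp hi] using ha2
  · intro a ha b hb h
    simp only [Finset.coe_filter, Set.mem_setOf_eq] at ha hb
    obtain ⟨i, _, rfl⟩ := mem_bindRange.mp ha.1
    obtain ⟨j, _, rfl⟩ := mem_bindRange.mp hb.1
    simpa using h
  · intro x hx
    simp only [Finset.coe_filter, Set.mem_setOf_eq] at hx
    refine ⟨(x : ℤ), ?_, by simp⟩
    simp only [Finset.coe_filter, Set.mem_setOf_eq]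
    exact ⟨mem_bindRange.mpr ⟨x, by simpa using hx.1, rfl⟩, hx.2⟩

lemma travs_card (τ : ZOrientation T) (e : T.E) :
    Multiset.card (τ.travs e) = 2 := by
  rw [ZOrientation.travs, card_listSum, List.map_map, ← τ.covers e]
  refine congrArg List.sum (List.map_congr_left fun Z _ => ?_)
  show Multiset.card (Multiset.ofList _) = Z.count e
  rw [count_eq_natFilter, Finset.card_def, Finset.filter_val]
  simp [Finset.range, Multiset.range]

lemma sum_card_filter_edge (Z : Zigzag T) (q' : ℕ → Prop) :
    ∑ e : T.E, ((Finset.range Z.n).filter fun i : ℕ => q' i ∧ Z.edge i = e).card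
      = ((Finset.range Z.n).filter fun i : ℕ => q' i).card := by
  simp only [Finset.card_filter]
  rw [Finset.sum_comm]
  refine Finset.sum_congr rfl fun i _ => ?_
  by_cases h : q' i
  · simp [h, Finset.sum_ite_eq]
  · simp [h]

/-- In one period of a zigzag, heads hitting `v` = tails hitting `v`. -/
lemma heads_eq_tails (Z : Zigzag T) (v : T.V) :
    ((Finset.range Z.n).filter fun i : ℕ => Z.head i = v).card
      = ((Finset.range Z.n).filter fun i : ℕ => Z.tail i = v).card := by
  classical
  have hLHS : ((Finset.range Z.n).filter fun i : ℕ => Z.head i = v).card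
      = ∑ i ∈ Finset.range Z.n, (if Z.tail ((i : ℕ) + 1 : ℕ) = v then 1 else 0) := by
    rw [Finset.card_filter]
    refine Finset.sum_congr rfl fun i _ => ?_
    have hc : (((i : ℕ) + 1 : ℕ) : ℤ) = ((i : ℕ) : ℤ) + 1 := by push_cast; ring
    rw [hc, ← Z.link (i : ℕ)]
  have hRHS : ((Finset.range Z.n).filter fun i : ℕ => Z.tail i = v).card
      = ∑ i ∈ Finset.range Z.n, (if Z.tail (i : ℕ) = v then 1 else 0) := by
    rw [Finset.card_filter]
  rw [hLHS, hRHS]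
  set g : ℕ → ℕ := fun i => if Z.tail (i : ℕ) = v then 1 else 0 with hg
  show ∑ i ∈ Finset.range Z.n, g (i + 1) = ∑ i ∈ Finset.range Z.n, g i
  have h1 : ∑ i ∈ Finset.range Z.n, g (i + 1) = ∑ i ∈ Finset.Ico 1 (Z.n + 1), g i := by
    rw [Finset.sum_Ico_eq_sum_range]
    simp [add_comm]
  have h2 : ∑ i ∈ Finset.Ico 1 (Z.n + 1), g i = ∑ i ∈ Finset.Ico 1 Z.n, g i + g Z.n :=
    Finset.sum_Ico_succ_top Z.npos g
  have h3 : ∑ i ∈ Finset.range Z.n, g i = g 0 + ∑ i ∈ Finset.Ico 1 Z.n, g i := by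
    rw [Finset.range_eq_Ico]
    exact Finset.sum_eq_sum_Ico_succ_bot Z.npos g
  have h4 : g Z.n = g 0 := by
    have hper := Z.per_tail 0
    rw [zero_add] at hper
    simp only [hg]
    norm_num [hper]
  rw [h1, h2, h3, h4]
  omega

lemma countP_pair (q : T.V × T.V → Prop) [DecidablePred q] (x y : T.V × T.V) :
    Multiset.countP q {x, y} = (if q x then 1 else 0) + (if q y then 1 else 0) := by
  have h : ({x, y} : Multiset (T.V × T.V)) = x ::ₘ y ::ₘ 0 := rfl
  rw [h, Multiset.countP_cons, Multiset.countP_cons, Multiset.countP_zero]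
  ring

lemma sum_countP (τ : ZOrientation T) (q : T.V × T.V → Prop) [DecidablePred q] :
    ∑ e : T.E, Multiset.countP q (τ.travs e) =
      (τ.zz.map fun Z =>
        ((Finset.range Z.n).filter fun i : ℕ => q (Z.tail i, Z.head i)).card).sum :=
  calc ∑ e : T.E, Multiset.countP q (τ.travs e)
      = ∑ e : T.E, (τ.zz.map fun Z =>
          ((Finset.range Z.n).filter fun i : ℕ =>
            q (Z.tail i, Z.head i) ∧ Z.edge i = e).card).sum :=
        Finset.sum_congr rfl fun e _ => countP_travs τ e q
    _ = (τ.zz.map fun Z => ∑ e : T.E,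
          ((Finset.range Z.n).filter fun i : ℕ =>
            q (Z.tail i, Z.head i) ∧ Z.edge i = e).card).sum :=
        finsum_listSum _ _
    _ = (τ.zz.map fun Z =>
          ((Finset.range Z.n).filter fun i : ℕ => q (Z.tail i, Z.head i)).card).sum :=
        by
          refine congrArg List.sum (List.map_congr_left fun Z _ => ?_)
          have h := sum_card_filter_edge Z (fun i : ℕ => q (Z.tail i, Z.head i))
          convert h using 3 with e he
          congr!

end Aux

/-- At every vertex, the number of type II edges directed into the vertex
equals the number directed out of it: the directed subgraph of type II edges
is an Eulerian digraph. -/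
theorem stmt_2 (T : Triang) (τ : ZOrientation T) (v : T.V) :
    (Finset.univ.filter fun e : T.E => ∃ w : T.V, τ.DirII e w v).card =
    (Finset.univ.filter fun e : T.E => ∃ w : T.V, τ.DirII e v w).card := by
  classical
  have hFG : ∑ e : T.E, Multiset.countP (fun p => p.2 = v) (τ.travs e)
      = ∑ e : T.E, Multiset.countP (fun p => p.1 = v) (τ.travs e) := by
    rw [sum_countP τ (fun p => p.2 = v), sum_countP τ (fun p => p.1 = v)]
    refine congrArg List.sum (List.map_congr_left fun Z _ => ?_)
    have h := heads_eq_tails Z v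
    convert h using 3
  have key : ∀ e : T.E,
      Multiset.countP (fun p => p.2 = v) (τ.travs e)
          + (if (∃ w, τ.DirII e v w) then 2 else 0)
        = Multiset.countP (fun p => p.1 = v) (τ.travs e)
          + (if (∃ w, τ.DirII e w v) then 2 else 0) := by
    intro e
    by_cases hin : ∃ w, τ.DirII e w v
    · obtain ⟨w, hw⟩ := hin
      have hw' : τ.travs e = {(w, v), (w, v)} := hw
      have hwv : w ≠ v := by
        have hm : ((w, v) : T.V × T.V) ∈ τ.travs e := by rw [hw']; simp
        exact (mem_travs hm).2.2
      have hout : ¬ ∃ u, τ.DirII e v u := by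
        rintro ⟨u, hu⟩
        have hu' : τ.travs e = {(v, u), (v, u)} := hu
        have hm : ((w, v) : T.V × T.V) ∈ τ.travs e := by rw [hw']; simp
        rw [hu'] at hm
        simp only [Multiset.insert_eq_cons, Multiset.mem_cons, Multiset.mem_singleton,
          Prod.mk.injEq] at hm
        rcases hm with ⟨h1, _⟩ | ⟨h1, _⟩ <;> exact hwv h1
      have hFe : Multiset.countP (fun p : T.V × T.V => p.2 = v) (τ.travs e) = 2 := by
        rw [hw', countP_pair]
        simp
      have hGe : Multiset.countP (fun p : T.V × T.V => p.1 = v) (τ.travs e) = 0 := by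
        rw [hw', countP_pair]
        simp [hwv]
      rw [hFe, hGe, if_neg hout, if_pos (⟨w, hw⟩ : ∃ w', τ.DirII e w' v)]
    · by_cases hout : ∃ u, τ.DirII e v u
      · obtain ⟨u, hu⟩ := hout
        have hu' : τ.travs e = {(v, u), (v, u)} := hu
        have hvu : v ≠ u := by
          have hm : ((v, u) : T.V × T.V) ∈ τ.travs e := by rw [hu']; simp
          exact (mem_travs hm).2.2
        have hFe : Multiset.countP (fun p : T.V × T.V => p.2 = v) (τ.travs e) = 0 := by
          rw [hu', countP_pair]
          simp [Ne.symm hvu]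
        have hGe : Multiset.countP (fun p : T.V × T.V => p.1 = v) (τ.travs e) = 2 := by
          rw [hu', countP_pair]
          simp
        rw [hFe, hGe, if_neg hin, if_pos (⟨u, hu⟩ : ∃ u', τ.DirII e v u')]
      · have hcard := travs_card τ e
        obtain ⟨p, q, hpq⟩ := Multiset.card_eq_two.mp hcard
        have hp : p ∈ τ.travs e := by rw [hpq]; simp
        have hq : q ∈ τ.travs e := by rw [hpq]; simp
        obtain ⟨hp1, hp2, hp12⟩ := mem_travs hp
        obtain ⟨hq1, hq2, hq12⟩ := mem_travs hq
        obtain ⟨a, b, hab, hends⟩ := Finset.card_eq_two.mp (T.ends_card e)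
        rw [hends] at hp1 hp2 hq1 hq2
        simp only [Finset.mem_insert, Finset.mem_singleton] at hp1 hp2 hq1 hq2
        have hpcase : p = (a, b) ∨ p = (b, a) := by
          rcases hp1 with h1 | h1 <;> rcases hp2 with h2 | h2 <;>
            first
              | (exfalso; exact hp12 (h1.trans h2.symm))
              | (left; exact Prod.ext h1 h2)
              | (right; exact Prod.ext h1 h2)
        have hqcase : q = (a, b) ∨ q = (b, a) := by
          rcases hq1 with h1 | h1 <;> rcases hq2 with h2 | h2 <;>
            first
              | (exfalso; exact hq12 (h1.trans h2.symm))
              | (left; exact Prod.ext h1 h2)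
              | (right; exact Prod.ext h1 h2)
        have hFGe : Multiset.countP (fun p : T.V × T.V => p.2 = v) (τ.travs e)
            = Multiset.countP (fun p : T.V × T.V => p.1 = v) (τ.travs e) := by
          rcases hpcase with hpc | hpc <;> rcases hqcase with hqc | hqc
          · have hdir : τ.DirII e a b := by
              show τ.travs e = _
              rw [hpq, hpc, hqc]
            by_cases hbv : b = v
            · exact absurd ⟨a, hbv ▸ hdir⟩ hin
            · by_cases hav : a = v
              · exact absurd ⟨b, hav ▸ hdir⟩ hout
              · rw [hpq, hpc, hqc, countP_pair, countP_pair]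
                simp [hav, hbv]
          · rw [hpq, hpc, hqc, countP_pair, countP_pair]
            simp only
            ring
          · rw [hpq, hpc, hqc, countP_pair, countP_pair]
            simp only
            ring
          · have hdir : τ.DirII e b a := by
              show τ.travs e = _
              rw [hpq, hpc, hqc]
            by_cases hav : a = v
            · exact absurd ⟨b, hav ▸ hdir⟩ hin
            · by_cases hbv : b = v
              · exact absurd ⟨a, hbv ▸ hdir⟩ hout
              · rw [hpq, hpc, hqc, countP_pair, countP_pair]
                simp [hav, hbv]
        rw [hFGe, if_neg hin, if_neg hout]
  have hsum : ∑ e : T.E, (Multiset.countP (fun p : T.V × T.V => p.2 = v) (τ.travs e)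
        + (if (∃ w, τ.DirII e v w) then 2 else 0))
      = ∑ e : T.E, (Multiset.countP (fun p : T.V × T.V => p.1 = v) (τ.travs e)
        + (if (∃ w, τ.DirII e w v) then 2 else 0)) :=
    Finset.sum_congr rfl fun e _ => key e
  rw [Finset.sum_add_distrib, Finset.sum_add_distrib] at hsum
  have hIn : ∑ e : T.E, (if (∃ w, τ.DirII e w v) then 2 else 0)
      = 2 * (Finset.univ.filter fun e : T.E => ∃ w : T.V, τ.DirII e w v).card := by
    rw [← Finset.sum_filter]
    simp [Finset.sum_const, mul_comm]
  have hOut : ∑ e : T.E, (if (∃ w, τ.DirII e v w) then 2 else 0)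
      = 2 * (Finset.univ.filter fun e : T.E => ∃ w : T.V, τ.DirII e v w).card := by
    rw [← Finset.sum_filter]
    simp [Finset.sum_const, mul_comm]
  rw [hIn, hOut, hFG] at hsum
  omega
end
end

section
/- A zigzag in a triangulation is never equal to its own reversal: for every zigzag Z, Z ≠ Z⁻¹ (as cyclic sequences of edges). -/
open scoped Classical

noncomputable section

variable {T : Triang}

/-- A zigzag is never equal to its own reversal as cyclic sequences. -/
theorem stmt_3 (T : Triang) (Z : Zigzag T) : ¬ IsReversal Z Z := by
  rintro ⟨k, he, ht, hh⟩
  rcases Int.even_or_odd k with ⟨m, hm⟩ | ⟨m, hm⟩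
  · have h := ht m
    have : k - m = m := by omega
    rw [this] at h
    exact Z.tail_ne_head m h
  · have h := he m
    have : k - m = m + 1 := by omega
    rw [this] at h
    exact Z.edge_ne_succ m h
end
end

section
/- Let (Γ,τ) be a z-oriented triangulation with all faces of type I. If every vertex of type I has directed link cycle C(v) consisting of type II edges (conditions (1),(2) of the structure result), then every zigzag of Γ containing an edge of type II is homogeneous; moreover no zigzag of Γ consists only of type I edges, hence every zigzag is homogeneous. -/
open scoped Classical

noncomputable section

variable {T : Triang}

section Aux
variable {T : Triang}

lemma exists_face (T : Triang) (e : T.E) : ∃ f, e ∈ T.sides f := by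
  have h := T.two_faces e
  have hne : (Finset.univ.filter fun f => e ∈ T.sides f).Nonempty := by
    rw [← Finset.card_pos, h]; norm_num
  obtain ⟨f, hf⟩ := hne
  exact ⟨f, (Finset.mem_filter.mp hf).2⟩

lemma typeI_typeII_exclusive (τ : ZOrientation T) (e : T.E) :
    τ.TypeI e → τ.TypeII e → False := by
  rintro ⟨v, w, h1, hvw⟩ ⟨a, b, h2⟩
  rw [h1] at h2
  have hv : (v, w) ∈ ({(a,b),(a,b)} : Multiset (T.V × T.V)) := by rw [← h2]; simp
  have hw : (w, v) ∈ ({(a,b),(a,b)} : Multiset (T.V × T.V)) := by rw [← h2]; simp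
  simp only [Multiset.insert_eq_cons, Multiset.mem_cons, Multiset.mem_singleton,
    or_self, Prod.mk.injEq] at hv hw
  exact hvw (hv.1.trans hw.1.symm)

lemma edge_typed (τ : ZOrientation T) (hface : ∀ f : T.F, τ.FaceTypeI f) (e : T.E) :
    τ.TypeI e ∨ τ.TypeII e := by
  obtain ⟨f, hf⟩ := exists_face T e
  exact (hface f).2 e hf

lemma unique_II (τ : ZOrientation T) (hface : ∀ f : T.F, τ.FaceTypeI f) {f : T.F} {e e' : T.E}
    (he : e ∈ T.sides f) (he' : e' ∈ T.sides f) (hne : e ≠ e')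
    (hII : τ.TypeII e) (hII' : τ.TypeII e') : False := by
  have hsub : ({e, e'} : Finset T.E) ⊆ (T.sides f).filter fun x => τ.TypeII x := by
    intro x hx
    rcases Finset.mem_insert.mp hx with h | h
    · subst h; exact Finset.mem_filter.mpr ⟨he, hII⟩
    · rw [Finset.mem_singleton] at h; subst h; exact Finset.mem_filter.mpr ⟨he', hII'⟩
  have hc := Finset.card_le_card hsub
  rw [(hface f).1, Finset.card_insert_of_notMem (by simpa using hne),
    Finset.card_singleton] at hc
  omega

lemma ends_pair {e : T.E} {v w : T.V} (hv : v ∈ T.ends e) (hw : w ∈ T.ends e)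
    (hne : v ≠ w) : T.ends e = {v, w} := by
  refine (Finset.eq_of_subset_of_card_le ?_ ?_).symm
  · intro x hx
    rcases Finset.mem_insert.mp hx with h | h
    · subst h; exact hv
    · rw [Finset.mem_singleton] at h; subst h; exact hw
  · rw [T.ends_card, Finset.card_insert_of_notMem (by simpa using hne), Finset.card_singleton]

lemma two_faces_eq {e : T.E} {f1 f2 : T.F} (h1 : e ∈ T.sides f1) (h2 : e ∈ T.sides f2)
    (hne : f1 ≠ f2) {f : T.F} (hf : e ∈ T.sides f) : f = f1 ∨ f = f2 := by
  have hsub : ({f1, f2} : Finset T.F) ⊆ Finset.univ.filter fun g => e ∈ T.sides g := by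
    intro x hx
    rcases Finset.mem_insert.mp hx with h | h
    · subst h; exact Finset.mem_filter.mpr ⟨Finset.mem_univ _, h1⟩
    · rw [Finset.mem_singleton] at h; subst h; exact Finset.mem_filter.mpr ⟨Finset.mem_univ _, h2⟩
  have heq : (Finset.univ.filter fun g => e ∈ T.sides g) = {f1, f2} := by
    apply (Finset.eq_of_subset_of_card_le hsub ?_).symm
    rw [T.two_faces, Finset.card_insert_of_notMem (by simpa using hne), Finset.card_singleton]
  have : f ∈ ({f1, f2} : Finset T.F) := heq ▸ Finset.mem_filter.mpr ⟨Finset.mem_univ _, hf⟩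
  simpa using this

lemma not_vtxI (τ : ZOrientation T) {e : T.E} {v : T.V} (hII : τ.TypeII e)
    (hv : v ∈ T.ends e) : ¬ τ.VertexTypeI v :=
  fun h => typeI_typeII_exclusive τ e (h e hv) hII

end Aux
section Aux2
variable {T : Triang}

lemma fact4 (τ : ZOrientation T) (hface : ∀ f : T.F, τ.FaceTypeI f) (Z : Zigzag T) (i : ℤ)
    (hQ : τ.TypeII (Z.edge i)) (hQ1 : τ.TypeII (Z.edge (i+1))) : False :=
  unique_II τ hface (Z.edge_mem i) (Z.edge_succ_mem i) (Z.edge_ne_succ i) hQ hQ1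

lemma star_zz (τ : ZOrientation T) (hface : ∀ f : T.F, τ.FaceTypeI f)
    (h1 : ∀ v : T.V, τ.VertexTypeI v →
      (∀ e ∈ oppEdges T v, τ.TypeII e) ∧ τ.IsDirCycle (oppEdges T v))
    (h2 : ∀ e : T.E, τ.TypeII e →
      (Finset.univ.filter fun v : T.V =>
        τ.VertexTypeI v ∧ e ∈ oppEdges T v).card = 2)
    (Z : Zigzag T) (i : ℤ)
    (hQi : τ.TypeII (Z.edge i)) (hQ2 : τ.TypeII (Z.edge (i+2))) : False := by
  have hyf : Z.edge (i+2) ∈ T.sides (Z.face (i+1)) := by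
    have := Z.edge_succ_mem (i+1); rwa [show i+1+1 = i+2 by ring] at this
  have hyf' : Z.edge (i+2) ∈ T.sides (Z.face (i+2)) := Z.edge_mem (i+2)
  have hfne : Z.face (i+1) ≠ Z.face (i+2) := by
    have := Z.face_ne_succ (i+1); rwa [show i+1+1 = i+2 by ring] at this
  obtain ⟨u1, u2, hu12, hset⟩ := Finset.card_eq_two.mp (h2 _ hQ2)
  have key : ∀ u : T.V, τ.VertexTypeI u → Z.edge (i+2) ∈ oppEdges T u →
      u ∈ T.ends (Z.edge (i+3)) ∧ u ∉ T.ends (Z.edge (i+2)) := by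
    intro u huI huo
    obtain ⟨-, f'', hyf'', hufv, hune⟩ := Finset.mem_filter.mp huo
    refine ⟨?_, hune⟩
    rcases two_faces_eq hyf hyf' hfne hyf'' with h | h
    · exfalso
      subst h
      have hx_mem : Z.edge (i+1) ∈ T.sides (Z.face (i+1)) := Z.edge_mem (i+1)
      have hxne : Z.edge (i+1) ≠ Z.edge (i+2) := by
        have := Z.edge_ne_succ (i+1); rwa [show i+1+1 = i+2 by ring] at this
      have hu_ends : u ∈ T.ends (Z.edge (i+1)) := by
        by_contra hnot
        have hmem : Z.edge (i+1) ∈ oppEdges T u :=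
          Finset.mem_filter.mpr ⟨Finset.mem_univ _, Z.face (i+1), hx_mem, hufv, hnot⟩
        exact unique_II τ hface hx_mem hyf hxne ((h1 u huI).1 _ hmem) hQ2
      rw [ends_pair (Z.mem_tail (i+1)) (Z.mem_head (i+1)) (Z.tail_ne_head (i+1))] at hu_ends
      rcases Finset.mem_insert.mp hu_ends with h' | h'
      · have hmm : u ∈ T.ends (Z.edge i) := by
          rw [h', ← Z.link i]; exact Z.mem_head i
        exact not_vtxI τ hQi hmm huI
      · rw [Finset.mem_singleton] at h'
        apply hune
        rw [h', Z.link (i+1), show i+1+1 = i+2 by ring]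
        exact Z.mem_tail (i+2)
    · subst h
      have hz_mem : Z.edge (i+3) ∈ T.sides (Z.face (i+2)) := by
        have := Z.edge_succ_mem (i+2); rwa [show i+2+1 = i+3 by ring] at this
      have hzne : Z.edge (i+2) ≠ Z.edge (i+3) := by
        have := Z.edge_ne_succ (i+2); rwa [show i+2+1 = i+3 by ring] at this
      by_contra hnot
      have hmem : Z.edge (i+3) ∈ oppEdges T u :=
        Finset.mem_filter.mpr ⟨Finset.mem_univ _, Z.face (i+2), hz_mem, hufv, hnot⟩
      exact unique_II τ hface hyf' hz_mem hzne hQ2 ((h1 u huI).1 _ hmem)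
  have hu1m : u1 ∈ Finset.univ.filter fun v : T.V =>
      τ.VertexTypeI v ∧ Z.edge (i+2) ∈ oppEdges T v := by rw [hset]; simp
  have hu2m : u2 ∈ Finset.univ.filter fun v : T.V =>
      τ.VertexTypeI v ∧ Z.edge (i+2) ∈ oppEdges T v := by rw [hset]; simp
  obtain ⟨-, hu1I, hu1o⟩ := Finset.mem_filter.mp hu1m
  obtain ⟨-, hu2I, hu2o⟩ := Finset.mem_filter.mp hu2m
  have k1 := key u1 hu1I hu1o
  have k2 := key u2 hu2I hu2o
  have hends3 : T.ends (Z.edge (i+3)) = {u1, u2} := ends_pair k1.1 k2.1 hu12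
  have hb3 : Z.head (i+2) ∈ T.ends (Z.edge (i+3)) := by
    rw [Z.link (i+2), show i+2+1 = i+3 by ring]; exact Z.mem_tail (i+3)
  have hby : Z.head (i+2) ∈ T.ends (Z.edge (i+2)) := Z.mem_head (i+2)
  rw [hends3] at hb3
  rcases Finset.mem_insert.mp hb3 with h | h
  · exact k1.2 (h ▸ hby)
  · rw [Finset.mem_singleton] at h; exact k2.2 (h ▸ hby)

end Aux2
section Aux3
variable {T : Triang}

lemma edge_shift (Z : Zigzag T) (a : ℤ) : ∀ k : ℤ, Z.edge (a + Z.n * k) = Z.edge a := by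
  intro k
  induction k using Int.induction_on with
  | zero => simp
  | succ k ih =>
      rw [show a + (Z.n : ℤ) * (k+1) = (a + Z.n * k) + Z.n by ring, Z.per_edge, ih]
  | pred k ih =>
      have h := Z.per_edge (a + Z.n * (-(k:ℤ)-1))
      rw [show a + (Z.n:ℤ) * (-(k:ℤ)-1) + Z.n = a + Z.n * (-(k:ℤ)) by ring] at h
      rw [← ih, ← h]

lemma edge_congr (Z : Zigzag T) {a b : ℤ} (h : ((Z.n : ℤ)) ∣ b - a) : Z.edge a = Z.edge b := by
  obtain ⟨k, hk⟩ := h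
  rw [show b = a + (Z.n:ℤ) * k by linarith, edge_shift]

/-- positions of type II edges in one period -/
def Aset (τ : ZOrientation T) (Z : Zigzag T) : Finset ℕ :=
  (Finset.range Z.n).filter fun i => τ.TypeII (Z.edge (i : ℤ))

def IIset (τ : ZOrientation T) : Finset T.E := Finset.univ.filter fun e => τ.TypeII e

end Aux3
section Aux4
variable {T : Triang}

lemma no_gap1 (τ : ZOrientation T) (hface : ∀ f : T.F, τ.FaceTypeI f)
    (Z : Zigzag T) {a b : ℤ} (hQa : τ.TypeII (Z.edge a)) (hQb : τ.TypeII (Z.edge b))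
    (hd : ((Z.n : ℤ)) ∣ b - (a + 1)) : False := by
  have := edge_congr Z hd
  exact fact4 τ hface Z a hQa (this ▸ hQb)

lemma no_gap2 (τ : ZOrientation T) (hface : ∀ f : T.F, τ.FaceTypeI f)
    (h1 : ∀ v : T.V, τ.VertexTypeI v →
      (∀ e ∈ oppEdges T v, τ.TypeII e) ∧ τ.IsDirCycle (oppEdges T v))
    (h2 : ∀ e : T.E, τ.TypeII e →
      (Finset.univ.filter fun v : T.V =>
        τ.VertexTypeI v ∧ e ∈ oppEdges T v).card = 2)
    (Z : Zigzag T) {a b : ℤ} (hQa : τ.TypeII (Z.edge a)) (hQb : τ.TypeII (Z.edge b))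
    (hd : ((Z.n : ℤ)) ∣ b - (a + 2)) : False := by
  have := edge_congr Z hd
  exact star_zz τ hface h1 h2 Z a hQa (this ▸ hQb)

lemma inj_on_blocks (τ : ZOrientation T) (hface : ∀ f : T.F, τ.FaceTypeI f)
    (h1 : ∀ v : T.V, τ.VertexTypeI v →
      (∀ e ∈ oppEdges T v, τ.TypeII e) ∧ τ.IsDirCycle (oppEdges T v))
    (h2 : ∀ e : T.E, τ.TypeII e →
      (Finset.univ.filter fun v : T.V =>
        τ.VertexTypeI v ∧ e ∈ oppEdges T v).card = 2)
    (Z : Zigzag T) : Set.InjOn (fun p : ℕ × ℕ => (p.1 + p.2) % Z.n)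
    ((Aset τ Z) ×ˢ Finset.range 3 : Finset (ℕ × ℕ)) := by
  rintro ⟨i, δ⟩ hp ⟨j, ε⟩ hq hmod
  simp only [Finset.coe_product, Set.mem_prod, Finset.mem_coe, Finset.mem_range,
    Aset, Finset.mem_filter] at hp hq
  obtain ⟨⟨hi, hQi⟩, hδ⟩ := hp
  obtain ⟨⟨hj, hQj⟩, hε⟩ := hq
  simp only at hmod
  have hdvd : ((Z.n : ℤ)) ∣ ((j : ℤ) + (ε : ℤ)) - ((i : ℤ) + (δ : ℤ)) := by
    have h' : (i + δ) ≡ (j + ε) [MOD Z.n] := hmod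
    have := h'.dvd
    push_cast at this ⊢
    exact this
  obtain ⟨k, hk⟩ := hdvd
  have hij : ∀ (_ : ((Z.n:ℤ)) ∣ (j:ℤ) - (i:ℤ)), i = j := by
    intro hd'
    obtain ⟨m, hm⟩ := hd'
    rcases lt_trichotomy m 0 with hmlt | hmeq | hmgt
    · exfalso
      have h1' : (Z.n : ℤ) * m ≤ -Z.n := by
        have hm1 : m ≤ -1 := by omega
        nlinarith [(by exact_mod_cast Z.npos : (0:ℤ) < (Z.n:ℤ))]
      omega
    · subst hmeq; omega
    · exfalso
      have h1' : ((Z.n:ℤ)) ≤ (Z.n : ℤ) * m := by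
        nlinarith [(by exact_mod_cast Z.npos : (0:ℤ) < (Z.n:ℤ))]
      omega
  interval_cases δ <;> interval_cases ε <;>
    first
    | (exact Prod.ext (hij ⟨k, by push_cast at hk ⊢; linarith⟩) rfl)
    | (exact Prod.ext (hij ⟨-k, by push_cast at hk ⊢; rw [mul_neg]; linarith⟩) rfl)
    | (exact absurd (no_gap1 τ hface Z hQi hQj ⟨k, by push_cast at hk ⊢; linarith⟩) id)
    | (exact absurd (no_gap1 τ hface Z hQj hQi ⟨-k, by push_cast at hk ⊢; rw [mul_neg]; linarith⟩) id)
    | (exact absurd (no_gap2 τ hface h1 h2 Z hQi hQj ⟨k, by push_cast at hk ⊢; linarith⟩) id)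
    | (exact absurd (no_gap2 τ hface h1 h2 Z hQj hQi ⟨-k, by push_cast at hk ⊢; rw [mul_neg]; linarith⟩) id)

lemma three_A_le (τ : ZOrientation T) (hface : ∀ f : T.F, τ.FaceTypeI f)
    (h1 : ∀ v : T.V, τ.VertexTypeI v →
      (∀ e ∈ oppEdges T v, τ.TypeII e) ∧ τ.IsDirCycle (oppEdges T v))
    (h2 : ∀ e : T.E, τ.TypeII e →
      (Finset.univ.filter fun v : T.V =>
        τ.VertexTypeI v ∧ e ∈ oppEdges T v).card = 2)
    (Z : Zigzag T) : 3 * (Aset τ Z).card ≤ Z.n := by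
  have hmap : ∀ p ∈ (Aset τ Z) ×ˢ Finset.range 3, (p.1 + p.2) % Z.n ∈ Finset.range Z.n := by
    intro p _
    exact Finset.mem_range.mpr (Nat.mod_lt _ Z.npos)
  have hc := Finset.card_le_card_of_injOn _ hmap (inj_on_blocks τ hface h1 h2 Z)
  simp only [Finset.card_product, Finset.card_range] at hc
  omega

end Aux4
section Aux5
variable {T : Triang}

lemma count_eq (Z : Zigzag T) (e : T.E) :
    Z.count e = ((Finset.range Z.n).filter fun i : ℕ => Z.edge (i:ℤ) = e).card := by
  unfold Zigzag.count
  simp only [Finset.pure_def, Finset.bind_def, Finset.sup_singleton_apply]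
  rw [← Finset.card_image_of_injective (f := (Nat.cast : ℕ → ℤ))
    ((Finset.range Z.n).filter fun i : ℕ => Z.edge (i:ℤ) = e) Nat.cast_injective]
  congr 1
  ext x
  simp only [Finset.mem_filter, Finset.mem_image, Finset.mem_range]
  constructor
  · rintro ⟨⟨a, ha, rfl⟩, h⟩
    exact ⟨a, ⟨ha, h⟩, rfl⟩
  · rintro ⟨a, ⟨ha, h⟩, rfl⟩
    exact ⟨⟨a, ha, rfl⟩, h⟩

lemma n_eq_sum (Z : Zigzag T) : Z.n = ∑ e : T.E, Z.count e := by
  simp only [count_eq]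
  have h := Finset.card_eq_sum_card_fiberwise (s := Finset.range Z.n)
    (f := fun i : ℕ => Z.edge (i : ℤ)) (t := (Finset.univ : Finset T.E))
    (fun i _ => Finset.mem_univ _)
  rw [Finset.card_range] at h
  exact h

lemma A_card (τ : ZOrientation T) (Z : Zigzag T) :
    (Aset τ Z).card = ∑ e ∈ IIset τ, Z.count e := by
  classical
  unfold Aset
  rw [Finset.card_eq_sum_card_fiberwise (f := fun i : ℕ => Z.edge (i : ℤ)) (t := IIset τ)
    (fun i hi => by
      simp only [IIset, Finset.mem_coe, Finset.mem_filter, Finset.mem_univ, true_and]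
      exact (Finset.mem_filter.mp hi).2)]
  apply Finset.sum_congr rfl
  intro e he
  rw [count_eq, Finset.filter_filter]
  congr 1
  apply Finset.filter_congr
  intro i _
  simp only [IIset, Finset.mem_filter, Finset.mem_univ, true_and] at he
  constructor
  · rintro ⟨-, h⟩; exact h
  · intro h; exact ⟨h ▸ he, h⟩

lemma list_sum_comm {α β : Type*} (l : List α) (s : Finset β) (f : α → β → ℕ) :
    (l.map fun a => ∑ b ∈ s, f a b).sum = ∑ b ∈ s, (l.map fun a => f a b).sum := by
  induction l with
  | nil => simp
  | cons a l ih => simp [ih, Finset.sum_add_distrib]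

lemma sum_n (τ : ZOrientation T) :
    (τ.zz.map fun Z => Z.n).sum = 2 * Fintype.card T.E := by
  have : (τ.zz.map fun Z => Z.n) = τ.zz.map fun Z => ∑ e : T.E, Z.count e := by
    apply List.map_congr_left
    intro Z _
    exact n_eq_sum Z
  rw [this, list_sum_comm]
  simp only [τ.covers]
  rw [Finset.sum_const, Finset.card_univ, smul_eq_mul, mul_comm]

lemma sum_A (τ : ZOrientation T) :
    (τ.zz.map fun Z => (Aset τ Z).card).sum = 2 * (IIset τ).card := by
  have : (τ.zz.map fun Z => (Aset τ Z).card)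
      = τ.zz.map fun Z => ∑ e ∈ IIset τ, Z.count e := by
    apply List.map_congr_left
    intro Z _
    exact A_card τ Z
  rw [this, list_sum_comm]
  simp only [τ.covers]
  rw [Finset.sum_const, smul_eq_mul, mul_comm]

lemma double_count (s : Finset T.E) :
    ∑ f : T.F, ((T.sides f).filter fun e => e ∈ s).card
      = ∑ e ∈ s, (Finset.univ.filter fun f : T.F => e ∈ T.sides f).card := by
  classical
  have h1 : ∀ f : T.F, ((T.sides f).filter fun e => e ∈ s).card
      = ∑ e ∈ s, if e ∈ T.sides f then 1 else 0 := by
    intro f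
    rw [← Finset.card_filter]
    congr 1
    ext e
    simp only [Finset.mem_filter]
    tauto
  simp only [h1]
  rw [Finset.sum_comm]
  apply Finset.sum_congr rfl
  intro e _
  rw [← Finset.card_filter]

lemma cardF_eq (τ : ZOrientation T) (hface : ∀ f : T.F, τ.FaceTypeI f) :
    Fintype.card T.F = 2 * (IIset τ).card := by
  classical
  have key : ∀ f : T.F, ((T.sides f).filter fun e => e ∈ IIset τ)
      = (T.sides f).filter fun e => τ.TypeII e := by
    intro f
    apply Finset.filter_congr
    intro e _
    simp [IIset]
  have h1 : ∑ f : T.F, ((T.sides f).filter fun e => e ∈ IIset τ).card = Fintype.card T.F := by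
    simp only [key, fun f => (hface f).1]
    rw [Finset.sum_const, Finset.card_univ, smul_eq_mul, mul_one]
  rw [← h1, double_count]
  simp only [T.two_faces]
  rw [Finset.sum_const, smul_eq_mul, mul_comm]

lemma cardE_eq (τ : ZOrientation T) (hface : ∀ f : T.F, τ.FaceTypeI f) :
    Fintype.card T.E = 3 * (IIset τ).card := by
  classical
  have h1 : ∑ f : T.F, ((T.sides f).filter fun e => e ∈ (Finset.univ : Finset T.E)).card
      = 3 * Fintype.card T.F := by
    have : ∀ f : T.F, ((T.sides f).filter fun e => e ∈ (Finset.univ : Finset T.E))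
        = T.sides f := by
      intro f; simp
    simp only [this, T.sides_card]
    rw [Finset.sum_const, Finset.card_univ, smul_eq_mul, mul_comm]
  have h2 := double_count (T := T) (Finset.univ : Finset T.E)
  rw [h1] at h2
  simp only [T.two_faces] at h2
  rw [Finset.sum_const, Finset.card_univ, smul_eq_mul] at h2
  have h3 := cardF_eq τ hface
  omega

end Aux5
section Aux6
variable {T : Triang}

lemma list_sum_map_mul {α : Type*} (l : List α) (c : ℕ) (f : α → ℕ) :
    (l.map fun a => c * f a).sum = c * (l.map f).sum := by
  induction l with
  | nil => simp
  | cons a t ih => simp [ih, Nat.mul_add]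

lemma list_eq_of_sum_eq {α : Type*} : ∀ (l : List α) (f g : α → ℕ),
    (∀ a ∈ l, f a ≤ g a) → (l.map f).sum = (l.map g).sum → ∀ a ∈ l, f a = g a := by
  intro l
  induction l with
  | nil => intro f g _ _ a ha; simp at ha
  | cons b t ih =>
      intro f g hle hs a ha
      have h1 : (t.map f).sum ≤ (t.map g).sum :=
        List.sum_le_sum fun i hi => hle i (List.mem_cons_of_mem _ hi)
      simp only [List.map_cons, List.sum_cons] at hs
      have hb : f b ≤ g b := hle b List.mem_cons_self
      have hfb : f b = g b := by omega
      rcases List.mem_cons.mp ha with h | h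
      · subst h; exact hfb
      · exact ih f g (fun x hx => hle x (List.mem_cons_of_mem _ hx)) (by omega) a h

lemma blocks_surj (τ : ZOrientation T) (hface : ∀ f : T.F, τ.FaceTypeI f)
    (h1 : ∀ v : T.V, τ.VertexTypeI v →
      (∀ e ∈ oppEdges T v, τ.TypeII e) ∧ τ.IsDirCycle (oppEdges T v))
    (h2 : ∀ e : T.E, τ.TypeII e →
      (Finset.univ.filter fun v : T.V =>
        τ.VertexTypeI v ∧ e ∈ oppEdges T v).card = 2)
    (Z : Zigzag T) (hn : 3 * (Aset τ Z).card = Z.n) :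
    ∀ j ∈ Finset.range Z.n, ∃ p ∈ (Aset τ Z) ×ˢ Finset.range 3, (p.1 + p.2) % Z.n = j := by
  classical
  have hmap : ∀ p ∈ (Aset τ Z) ×ˢ Finset.range 3, (p.1 + p.2) % Z.n ∈ Finset.range Z.n :=
    fun p _ => Finset.mem_range.mpr (Nat.mod_lt _ Z.npos)
  have himg : ((Aset τ Z) ×ˢ Finset.range 3).image (fun p : ℕ × ℕ => (p.1 + p.2) % Z.n)
      = Finset.range Z.n := by
    apply Finset.eq_of_subset_of_card_le
    · intro x hx
      obtain ⟨p, hp, rfl⟩ := Finset.mem_image.mp hx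
      exact hmap p hp
    · rw [Finset.card_image_of_injOn (inj_on_blocks τ hface h1 h2 Z),
        Finset.card_product, Finset.card_range, Finset.card_range]
      omega
  intro j hj
  rw [← himg] at hj
  obtain ⟨p, hp, hφ⟩ := Finset.mem_image.mp hj
  exact ⟨p, hp, hφ⟩

lemma Q_succ3 (τ : ZOrientation T) (hface : ∀ f : T.F, τ.FaceTypeI f)
    (h1 : ∀ v : T.V, τ.VertexTypeI v →
      (∀ e ∈ oppEdges T v, τ.TypeII e) ∧ τ.IsDirCycle (oppEdges T v))
    (h2 : ∀ e : T.E, τ.TypeII e →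
      (Finset.univ.filter fun v : T.V =>
        τ.VertexTypeI v ∧ e ∈ oppEdges T v).card = 2)
    (Z : Zigzag T) (hn : 3 * (Aset τ Z).card = Z.n)
    (p : ℤ) (hQ : τ.TypeII (Z.edge p)) : τ.TypeII (Z.edge (p + 3)) := by
  have hnpos : (0 : ℤ) < (Z.n : ℤ) := by exact_mod_cast Z.npos
  set r : ℤ := (p + 3) % (Z.n : ℤ) with hr
  have hr0 : 0 ≤ r := Int.emod_nonneg _ (by omega)
  have hrlt : r < Z.n := Int.emod_lt_of_pos _ hnpos
  have hj : r.toNat < Z.n := by omega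
  obtain ⟨⟨i, δ⟩, hpmem, hφ⟩ := blocks_surj τ hface h1 h2 Z hn r.toNat (Finset.mem_range.mpr hj)
  rw [Finset.mem_product] at hpmem
  obtain ⟨hiA, hδ⟩ := hpmem
  obtain ⟨hi, hQi⟩ := Finset.mem_filter.mp hiA
  rw [Finset.mem_range] at hδ
  simp only at hφ
  have hc : ((i : ℤ) + (δ : ℤ)) % (Z.n : ℤ) = (p + 3) % (Z.n : ℤ) := by
    have c1 : (((i + δ) % Z.n : ℕ) : ℤ) = ((i : ℤ) + (δ : ℤ)) % (Z.n : ℤ) := by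
      push_cast [Int.natCast_mod]
      ring_nf
    rw [hφ] at c1
    rw [← c1, Int.toNat_of_nonneg hr0]
  have hdvd : ((Z.n : ℤ)) ∣ (p + 3) - ((i : ℤ) + (δ : ℤ)) := Int.ModEq.dvd hc
  obtain ⟨k, hk⟩ := hdvd
  interval_cases δ
  · have he : Z.edge (i : ℤ) = Z.edge (p + 3) :=
      edge_congr Z ⟨k, by push_cast at hk ⊢; linarith⟩
    exact he ▸ hQi
  · exfalso
    have he : Z.edge (i : ℤ) = Z.edge (p + 2) :=
      edge_congr Z ⟨k, by push_cast at hk ⊢; linarith⟩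
    exact star_zz τ hface h1 h2 Z p hQ (he ▸ hQi)
  · exfalso
    have he : Z.edge (i : ℤ) = Z.edge (p + 1) :=
      edge_congr Z ⟨k, by push_cast at hk ⊢; linarith⟩
    exact fact4 τ hface Z p hQ (he ▸ hQi)

end Aux6

/-- Under conditions (1) and (2) of the structure result — vertices of type I
exist, every type I vertex has a directed link cycle of type II edges, and
every type II edge lies in exactly two such cycles — every zigzag containing
a type II edge is homogeneous, no zigzag consists only of type I edges, and
hence every zigzag is homogeneous. -/
theorem stmt_5 (T : Triang) (τ : ZOrientation T)
    (hface : ∀ f : T.F, τ.FaceTypeI f)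
    (h1ex : ∃ v : T.V, τ.VertexTypeI v)
    (h1 : ∀ v : T.V, τ.VertexTypeI v →
      (∀ e ∈ oppEdges T v, τ.TypeII e) ∧ τ.IsDirCycle (oppEdges T v))
    (h2 : ∀ e : T.E, τ.TypeII e →
      (Finset.univ.filter fun v : T.V =>
        τ.VertexTypeI v ∧ e ∈ oppEdges T v).card = 2) :
    (∀ Z ∈ τ.zz, (∃ i : ℤ, τ.TypeII (Z.edge i)) → τ.Homogeneous Z) ∧
    (∀ Z ∈ τ.zz, ∃ i : ℤ, τ.TypeII (Z.edge i)) ∧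
    (∀ Z ∈ τ.zz, τ.Homogeneous Z) := by
  have hsums : (τ.zz.map fun Z => 3 * (Aset τ Z).card).sum = (τ.zz.map fun Z => Z.n).sum := by
    rw [list_sum_map_mul, sum_A, sum_n, cardE_eq τ hface]
    ring
  have hEq : ∀ Z ∈ τ.zz, 3 * (Aset τ Z).card = Z.n :=
    list_eq_of_sum_eq τ.zz (fun Z => 3 * (Aset τ Z).card) (fun Z => Z.n)
      (fun Z _ => three_A_le τ hface h1 h2 Z) hsums
  have hB : ∀ Z ∈ τ.zz, ∃ i : ℤ, τ.TypeII (Z.edge i) := by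
    intro Z hZ
    have hn := hEq Z hZ
    have hnz : 0 < (Aset τ Z).card := by have := Z.npos; omega
    obtain ⟨i, hi⟩ := Finset.card_pos.mp hnz
    exact ⟨(i : ℤ), (Finset.mem_filter.mp hi).2⟩
  have hA : ∀ Z ∈ τ.zz, τ.Homogeneous Z := by
    intro Z hZ
    refine ⟨hB Z hZ, fun i hQ => ?_⟩
    have hI1 : ¬ τ.TypeII (Z.edge (i+1)) := fun h => fact4 τ hface Z i hQ h
    have hI2 : ¬ τ.TypeII (Z.edge (i+2)) := fun h => star_zz τ hface h1 h2 Z i hQ h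
    exact ⟨(edge_typed τ hface _).resolve_right hI1,
      (edge_typed τ hface _).resolve_right hI2,
      Q_succ3 τ hface h1 h2 Z (hEq Z hZ) i hQ⟩
  exact ⟨fun Z hZ _ => hA Z hZ, hB, hA⟩
end
end

section
/- For n = 2k with k odd, the bipyramid BP_n has exactly two zigzags up to reversal, and for n = 2k with k even, BP_n has exactly four zigzags up to reversal. -/
open scoped Classical

noncomputable section

variable {T : Triang}

/-- A realization of the `n`-gonal bipyramid `BP_n` as a triangulation:
base vertices `base i` (`i : ZMod n`), apexes `apex 0, apex 1`,
base edges `be i` joining `base i, base (i+1)`, lateral edges `ae a i`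
joining `apex a, base i`, and faces `fc a i` with sides `be i, ae a i, ae a (i+1)`. -/
structure Bipyramid (T : Triang) (n : ℕ) where
  base : ZMod n → T.V
  apex : Fin 2 → T.V
  be : ZMod n → T.E
  ae : Fin 2 → ZMod n → T.E
  fc : Fin 2 → ZMod n → T.F
  base_inj : Function.Injective base
  apex_inj : Function.Injective apex
  apex_ne_base : ∀ a i, apex a ≠ base i
  edge_inj : Function.Injective
    (Sum.elim be (fun p : Fin 2 × ZMod n => ae p.1 p.2))
  edge_surj : ∀ e : T.E, (∃ i, e = be i) ∨ ∃ a i, e = ae a i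
  face_inj : Function.Injective (fun p : Fin 2 × ZMod n => fc p.1 p.2)
  face_surj : ∀ f : T.F, ∃ a i, f = fc a i
  vert_surj : ∀ v : T.V, (∃ i, v = base i) ∨ ∃ a, v = apex a
  ends_be : ∀ i, T.ends (be i) = {base i, base (i + 1)}
  ends_ae : ∀ a i, T.ends (ae a i) = {apex a, base i}
  sides_fc : ∀ a i, T.sides (fc a i) = {be i, ae a i, ae a (i + 1)}

/-- `T` has exactly `m` zigzags up to reversal. -/
def ZigzagClasses (T : Triang) (m : ℕ) : Prop :=
  ∃ Zs : Fin m → Zigzag T,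
    (∀ j j', j ≠ j' → ¬ CyclicEq (Zs j) (Zs j') ∧ ¬ IsReversal (Zs j) (Zs j')) ∧
    ∀ Z : Zigzag T, ∃ j, CyclicEq Z (Zs j) ∨ IsReversal Z (Zs j)


/-! ### Auxiliary development for `stmt_9` -/

namespace BPZ

/-- swap on `Fin 2` -/
def sw : Fin 2 → Fin 2 := fun a => ⟨1 - a.val, by omega⟩

lemma sw_ne (a : Fin 2) : sw a ≠ a := by fin_cases a <;> decide

lemma sw_sw (a : Fin 2) : sw (sw a) = a := by fin_cases a <;> decide

lemma eq_sw_of_ne {a b : Fin 2} (h : b ≠ a) : b = sw a := by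
  fin_cases a <;> fin_cases b <;> first | rfl | simp_all | (exfalso; exact h rfl)

/-- add `t : ℤ` to `a0 : Fin 2` (parity action) -/
def aa (a0 : Fin 2) (t : ℤ) : Fin 2 := if t % 2 = 0 then a0 else sw a0

lemma aa_add (a0 : Fin 2) (u v : ℤ) : aa a0 (u + v) = aa (aa a0 v) u := by
  unfold aa
  by_cases h1 : u % 2 = 0 <;> by_cases h2 : v % 2 = 0
  · have h3 : (u + v) % 2 = 0 := by omega
    simp [h1, h2, h3]
  · have h3 : ¬ ((u + v) % 2 = 0) := by omega
    simp [h1, h2, h3]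
  · have h3 : ¬ ((u + v) % 2 = 0) := by omega
    simp [h1, h2, h3]
  · have h3 : (u + v) % 2 = 0 := by omega
    simp [h1, h2, h3, sw_sw]

lemma aa_zero (a0 : Fin 2) : aa a0 0 = a0 := by simp [aa]

lemma aa_even (a0 : Fin 2) {t : ℤ} (h : t % 2 = 0) : aa a0 t = a0 := by simp [aa, h]

lemma aa_eq_self {a0 : Fin 2} {t : ℤ} (h : aa a0 t = a0) : t % 2 = 0 := by
  by_contra hc
  rw [aa, if_neg hc] at h
  exact sw_ne a0 h

section Main

variable {T : Triang} {k : ℕ}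

lemma cast_ne (hk : 2 ≤ k) {a b : ℕ} (hab : a ≠ b) (ha : a < 2 * k) (hb : b < 2 * k) :
    (a : ZMod (2 * k)) ≠ (b : ZMod (2 * k)) := by
  intro h
  have h1 := ZMod.val_cast_of_lt ha
  have h2 := ZMod.val_cast_of_lt hb
  rw [h, h2] at h1
  exact hab h1.symm

lemma zfacts (hk : 2 ≤ k) :
    ((1 : ZMod (2 * k)) ≠ 0) ∧ ((2 : ZMod (2 * k)) ≠ 0) ∧ ((3 : ZMod (2 * k)) ≠ 0) ∧
      ((1 : ZMod (2 * k)) ≠ 2) ∧ ((1 : ZMod (2 * k)) ≠ 3) ∧ ((2 : ZMod (2 * k)) ≠ 3) := by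
  have e0 : ((0 : ℕ) : ZMod (2 * k)) = 0 := by push_cast; ring
  have e1 : ((1 : ℕ) : ZMod (2 * k)) = 1 := by push_cast; ring
  have e2 : ((2 : ℕ) : ZMod (2 * k)) = 2 := by push_cast; ring
  have e3 : ((3 : ℕ) : ZMod (2 * k)) = 3 := by push_cast; ring
  refine ⟨?_, ?_, ?_, ?_, ?_, ?_⟩
  · rw [← e1, ← e0]; exact cast_ne hk (by omega) (by omega) (by omega)
  · rw [← e2, ← e0]; exact cast_ne hk (by omega) (by omega) (by omega)
  · rw [← e3, ← e0]; exact cast_ne hk (by omega) (by omega) (by omega)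
  · rw [← e1, ← e2]; exact cast_ne hk (by omega) (by omega) (by omega)
  · rw [← e1, ← e3]; exact cast_ne hk (by omega) (by omega) (by omega)
  · rw [← e2, ← e3]; exact cast_ne hk (by omega) (by omega) (by omega)

variable (B : Bipyramid T (2 * k))

lemma be_inj {i j : ZMod (2 * k)} (h : B.be i = B.be j) : i = j := by
  have := B.edge_inj (a₁ := Sum.inl i) (a₂ := Sum.inl j) h
  simpa using this

lemma ae_inj {a a' : Fin 2} {i j : ZMod (2 * k)} (h : B.ae a i = B.ae a' j) :
    a = a' ∧ i = j := by
  have := B.edge_inj (a₁ := Sum.inr (a, i)) (a₂ := Sum.inr (a', j)) h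
  simpa [Prod.ext_iff] using this

lemma be_ne_ae {i : ZMod (2 * k)} {a : Fin 2} {j : ZMod (2 * k)} : B.be i ≠ B.ae a j := by
  intro h
  have := B.edge_inj (a₁ := Sum.inl i) (a₂ := Sum.inr (a, j)) h
  simpa using this

lemma fc_inj {a a' : Fin 2} {i j : ZMod (2 * k)} (h : B.fc a i = B.fc a' j) :
    a = a' ∧ i = j := by
  have := B.face_inj (a₁ := (a, i)) (a₂ := (a', j)) h
  simpa [Prod.ext_iff] using this

lemma base_ne_apex (i : ZMod (2 * k)) (a : Fin 2) : B.base i ≠ B.apex a :=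
  fun h => B.apex_ne_base a i h.symm

lemma mem_sides_fc {e : T.E} {a : Fin 2} {i : ZMod (2 * k)} :
    e ∈ T.sides (B.fc a i) ↔ e = B.be i ∨ e = B.ae a i ∨ e = B.ae a (i + 1) := by
  rw [B.sides_fc]
  simp [Finset.mem_insert]

lemma mem_ends_be {v : T.V} {j : ZMod (2 * k)} :
    v ∈ T.ends (B.be j) ↔ v = B.base j ∨ v = B.base (j + 1) := by
  rw [B.ends_be]
  simp [Finset.mem_insert]

lemma mem_ends_ae {v : T.V} {a : Fin 2} {m : ZMod (2 * k)} :
    v ∈ T.ends (B.ae a m) ↔ v = B.apex a ∨ v = B.base m := by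
  rw [B.ends_ae]
  simp [Finset.mem_insert]

lemma be_mem_face {j : ZMod (2 * k)} {f : T.F} (h : B.be j ∈ T.sides f) :
    ∃ a, f = B.fc a j := by
  obtain ⟨a, i, rfl⟩ := B.face_surj f
  rw [mem_sides_fc B] at h
  rcases h with h | h | h
  · exact ⟨a, by rw [be_inj B h]⟩
  · exact absurd h (be_ne_ae B)
  · exact absurd h (be_ne_ae B)

lemma ae_mem_face {a : Fin 2} {m : ZMod (2 * k)} {f : T.F} (h : B.ae a m ∈ T.sides f) :
    f = B.fc a m ∨ f = B.fc a (m - 1) := by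
  obtain ⟨a', i, rfl⟩ := B.face_surj f
  rw [mem_sides_fc B] at h
  rcases h with h | h | h
  · exact absurd h.symm (be_ne_ae B)
  · obtain ⟨rfl, rfl⟩ := ae_inj B h
    exact Or.inl rfl
  · obtain ⟨rfl, rfl⟩ := ae_inj B h
    right
    congr 1
    ring

lemma card_two_unique {α : Type*} [DecidableEq α] {s : Finset α} (h : s.card = 2)
    {w u v : α} (hw : w ∈ s) (hu : u ∈ s) (hv : v ∈ s) (huw : u ≠ w) (hvw : v ≠ w) :
    u = v := by
  obtain ⟨x, y, hxy, rfl⟩ := Finset.card_eq_two.mp h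
  simp only [Finset.mem_insert, Finset.mem_singleton] at hw hu hv
  rcases hw with rfl | rfl <;> rcases hu with rfl | rfl <;> rcases hv with rfl | rfl <;> tauto

lemma face_unique {e : T.E} {f f1 f2 : T.F} (hf : e ∈ T.sides f)
    (h1 : e ∈ T.sides f1) (h2 : e ∈ T.sides f2) (h1f : f1 ≠ f) (h2f : f2 ≠ f) : f1 = f2 := by
  refine card_two_unique (T.two_faces e) (w := f) ?_ ?_ ?_ h1f h2f <;>
    simp [Finset.mem_filter, hf, h1, h2]

include B in
lemma next_edge_unique (hk : 2 ≤ k) {f : T.F} {e e1 e2 : T.E} {h : T.V}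
    (hef : e ∈ T.sides f) (hhe : h ∈ T.ends e)
    (h1f : e1 ∈ T.sides f) (h1e : e1 ≠ e) (hh1 : h ∈ T.ends e1)
    (h2f : e2 ∈ T.sides f) (h2e : e2 ≠ e) (hh2 : h ∈ T.ends e2) : e1 = e2 := by
  obtain ⟨z1, z2, z3, z4, z5, z6⟩ := zfacts (k := k) hk
  obtain ⟨a, i, rfl⟩ := B.face_surj f
  rw [mem_sides_fc B] at hef h1f h2f
  rcases hef with rfl | rfl | rfl <;> rcases h1f with rfl | rfl | rfl <;>
    rcases h2f with rfl | rfl | rfl <;>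
    first
    | rfl
    | exact absurd rfl h1e
    | exact absurd rfl h2e
    | (exfalso
       simp only [mem_ends_be B, mem_ends_ae B] at hhe hh1 hh2
       rcases hhe with rfl | rfl <;>
         simp_all [B.base_inj.eq_iff, B.apex_inj.eq_iff, B.apex_ne_base, base_ne_apex B,
           left_eq_add, add_eq_left, add_right_inj])


/-- full state equality of two zigzags at given indices -/
def StEq (Z W : Zigzag T) (i j : ℤ) : Prop :=
  Z.edge i = W.edge j ∧ Z.tail i = W.tail j ∧ Z.head i = W.head j ∧ Z.face i = W.face j

include B in
lemma stEq_succ (hk : 2 ≤ k) {Z W : Zigzag T} {i j : ℤ} (h : StEq Z W i j) :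
    StEq Z W (i + 1) (j + 1) := by
  obtain ⟨he, ht, hh, hf⟩ := h
  have htail : Z.tail (i + 1) = W.tail (j + 1) := by
    rw [← Z.link, ← W.link, hh]
  have hedge : Z.edge (i + 1) = W.edge (j + 1) := by
    refine next_edge_unique B hk (f := Z.face i) (e := Z.edge i) (h := Z.head i)
      (Z.edge_mem i) (Z.mem_head i) (Z.edge_succ_mem i) (Z.edge_ne_succ i).symm
      (by rw [Z.link]; exact Z.mem_tail (i + 1))
      (by rw [hf]; exact W.edge_succ_mem j) (by rw [he]; exact (W.edge_ne_succ j).symm)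
      (by rw [hh, W.link]; exact W.mem_tail (j + 1))
  have hhead : Z.head (i + 1) = W.head (j + 1) := by
    refine card_two_unique (T.ends_card (Z.edge (i + 1))) (w := Z.tail (i + 1))
      (Z.mem_tail _) (Z.mem_head _) ?_ ?_ ?_
    · rw [hedge]; exact W.mem_head _
    · exact fun hq => (Z.tail_ne_head (i + 1)) hq.symm
    · rw [htail]; exact fun hq => (W.tail_ne_head (j + 1)) hq.symm
  have hface : Z.face (i + 1) = W.face (j + 1) := by
    refine face_unique (e := Z.edge (i + 1)) (f := Z.face i) (Z.edge_succ_mem i)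
      (Z.edge_mem (i + 1)) ?_ (Z.face_ne_succ i).symm ?_
    · rw [hedge]; exact W.edge_mem (j + 1)
    · rw [hf]; exact (W.face_ne_succ j).symm
  exact ⟨hedge, htail, hhead, hface⟩

include B in
lemma stEq_pred (hk : 2 ≤ k) {Z W : Zigzag T} {i j : ℤ} (h : StEq Z W i j) :
    StEq Z W (i - 1) (j - 1) := by
  obtain ⟨he, ht, hh, hf⟩ := h
  have eZ : Z.edge (i - 1 + 1) = Z.edge i := by norm_num
  have eW : W.edge (j - 1 + 1) = W.edge j := by norm_num
  have fZ : Z.face (i - 1 + 1) = Z.face i := by norm_num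
  have fW : W.face (j - 1 + 1) = W.face j := by norm_num
  have tZ : Z.tail (i - 1 + 1) = Z.tail i := by norm_num
  have tW : W.tail (j - 1 + 1) = W.tail j := by norm_num
  -- Z.edge i ∈ sides of Z.face (i-1)
  have hZm : Z.edge i ∈ T.sides (Z.face (i - 1)) := by
    have := Z.edge_succ_mem (i - 1); rwa [eZ] at this
  have hWm : W.edge j ∈ T.sides (W.face (j - 1)) := by
    have := W.edge_succ_mem (j - 1); rwa [eW] at this
  have hface : Z.face (i - 1) = W.face (j - 1) := by
    refine face_unique (e := Z.edge i) (f := Z.face i) (Z.edge_mem i) hZm ?_ ?_ ?_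
    · rw [he]; exact hWm
    · have := Z.face_ne_succ (i - 1); rwa [fZ] at this
    · have := W.face_ne_succ (j - 1); rw [fW] at this; rw [hf]; exact this
  have hZlink : Z.head (i - 1) = Z.tail i := by have := Z.link (i - 1); rwa [tZ] at this
  have hWlink : W.head (j - 1) = W.tail j := by have := W.link (j - 1); rwa [tW] at this
  have hZne : Z.edge (i - 1) ≠ Z.edge i := by
    have := Z.edge_ne_succ (i - 1); rwa [eZ] at this
  have hWne : W.edge (j - 1) ≠ W.edge j := by
    have := W.edge_ne_succ (j - 1); rwa [eW] at this
  have hedge : Z.edge (i - 1) = W.edge (j - 1) := by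
    refine next_edge_unique B hk (f := Z.face (i - 1)) (e := Z.edge i) (h := Z.tail i)
      hZm (Z.mem_tail i) (Z.edge_mem (i - 1)) hZne
      (by rw [← hZlink]; exact Z.mem_head (i - 1)) ?_ ?_ ?_
    · rw [hface]; exact W.edge_mem (j - 1)
    · rw [he]; exact hWne
    · rw [ht, ← hWlink]; exact W.mem_head (j - 1)
  have hhead : Z.head (i - 1) = W.head (j - 1) := by rw [hZlink, hWlink, ht]
  have htail : Z.tail (i - 1) = W.tail (j - 1) := by
    refine card_two_unique (T.ends_card (Z.edge (i - 1))) (w := Z.head (i - 1))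
      (Z.mem_head _) (Z.mem_tail _) ?_ (Z.tail_ne_head (i - 1)) ?_
    · rw [hedge]; exact W.mem_tail _
    · rw [hhead]; exact W.tail_ne_head (j - 1)
  exact ⟨hedge, htail, hhead, hface⟩

include B in
lemma stEq_all (hk : 2 ≤ k) {Z W : Zigzag T} {p : ℤ} (h : StEq Z W 0 p) :
    ∀ i : ℤ, StEq Z W i (i + p) := by
  intro i
  induction i using Int.induction_on with
  | zero => simpa using h
  | succ i ih =>
      have h2 := stEq_succ B hk ih
      have : (i : ℤ) + p + 1 = (i + 1) + p := by ring
      rwa [this] at h2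
  | pred i ih =>
      have h2 := stEq_pred B hk ih
      have e : (-(i : ℤ)) + p - 1 = (-(i : ℤ) - 1) + p := by ring
      rwa [e] at h2

/-- the reversal of a zigzag -/
def Zrev (Z : Zigzag T) : Zigzag T where
  n := Z.n
  npos := Z.npos
  edge i := Z.edge (-i)
  tail i := Z.head (-i)
  head i := Z.tail (-i)
  face i := Z.face (-i - 1)
  per_edge i := by
    show Z.edge (-(i + (Z.n : ℤ))) = Z.edge (-i)
    have h := Z.per_edge (-i - Z.n)
    have e1 : -i - (Z.n : ℤ) + Z.n = -i := by ring
    have e2 : -(i + (Z.n : ℤ)) = -i - Z.n := by ring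
    rw [e1] at h
    rw [e2, h]
  per_tail i := by
    show Z.head (-(i + (Z.n : ℤ))) = Z.head (-i)
    have h := Z.per_head (-i - Z.n)
    have e1 : -i - (Z.n : ℤ) + Z.n = -i := by ring
    have e2 : -(i + (Z.n : ℤ)) = -i - Z.n := by ring
    rw [e1] at h
    rw [e2, h]
  per_head i := by
    show Z.tail (-(i + (Z.n : ℤ))) = Z.tail (-i)
    have h := Z.per_tail (-i - Z.n)
    have e1 : -i - (Z.n : ℤ) + Z.n = -i := by ring
    have e2 : -(i + (Z.n : ℤ)) = -i - Z.n := by ring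
    rw [e1] at h
    rw [e2, h]
  per_face i := by
    show Z.face (-(i + (Z.n : ℤ)) - 1) = Z.face (-i - 1)
    have h := Z.per_face (-i - 1 - Z.n)
    have e1 : -i - 1 - (Z.n : ℤ) + Z.n = -i - 1 := by ring
    have e2 : -(i + (Z.n : ℤ)) - 1 = -i - 1 - Z.n := by ring
    rw [e1] at h
    rw [e2, h]
  mem_tail i := Z.mem_head (-i)
  mem_head i := Z.mem_tail (-i)
  tail_ne_head i := fun h => (Z.tail_ne_head (-i)) h.symm
  link i := by
    show Z.tail (-i) = Z.head (-(i + 1))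
    have h := Z.link (-i - 1)
    have e1 : -i - 1 + 1 = -i := by ring
    have e2 : -(i + 1) = -i - 1 := by ring
    rw [e1] at h
    rw [e2, ← h]
  edge_mem i := by
    show Z.edge (-i) ∈ T.sides (Z.face (-i - 1))
    have h := Z.edge_succ_mem (-i - 1)
    have e1 : -i - 1 + 1 = -i := by ring
    rwa [e1] at h
  edge_succ_mem i := by
    show Z.edge (-(i + 1)) ∈ T.sides (Z.face (-i - 1))
    have h := Z.edge_mem (-i - 1)
    have e2 : -(i + 1) = -i - 1 := by ring
    rw [e2]
    exact h
  edge_ne_succ i := by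
    show Z.edge (-i) ≠ Z.edge (-(i + 1))
    have h := Z.edge_ne_succ (-i - 1)
    have e1 : -i - 1 + 1 = -i := by ring
    have e2 : -(i + 1) = -i - 1 := by ring
    rw [e1] at h
    rw [e2]
    exact h.symm
  face_ne_succ i := by
    show Z.face (-i - 1) ≠ Z.face (-(i + 1) - 1)
    have h := Z.face_ne_succ (-i - 2)
    have e1 : -i - 2 + 1 = -i - 1 := by ring
    have e2 : -(i + 1) - 1 = -i - 2 := by ring
    rw [e1] at h
    rw [e2]
    exact h.symm
  disjoint_two i := by
    show T.ends (Z.edge (-i)) ∩ T.ends (Z.edge (-(i + 2))) = ∅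
    have h := Z.disjoint_two (-i - 2)
    have e1 : -i - 2 + 2 = -i := by ring
    have e2 : -(i + 2) = -i - 2 := by ring
    rw [e1] at h
    rw [e2, Finset.inter_comm, h]
  minimal m hm hper := by
    refine Z.minimal m hm fun i => ?_
    have h : Z.edge (-(-(i + (m : ℤ)) + m)) = Z.edge (-(-(i + (m : ℤ)))) := hper (-(i + m))
    have e1 : -(-(i + (m : ℤ)) + m) = i := by ring
    have e2 : -(-(i + (m : ℤ))) = i + m := by ring
    rw [e1, e2] at h
    exact h.symm

@[simp] lemma Zrev_edge (Z : Zigzag T) (i : ℤ) : (Zrev Z).edge i = Z.edge (-i) := rfl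
@[simp] lemma Zrev_tail (Z : Zigzag T) (i : ℤ) : (Zrev Z).tail i = Z.head (-i) := rfl
@[simp] lemma Zrev_head (Z : Zigzag T) (i : ℤ) : (Zrev Z).head i = Z.tail (-i) := rfl
@[simp] lemma Zrev_face (Z : Zigzag T) (i : ℤ) : (Zrev Z).face i = Z.face (-i - 1) := rfl


lemma aa_succ (a0 : Fin 2) (t : ℤ) : aa a0 (t + 1) = sw (aa a0 t) := by
  unfold aa
  by_cases h : t % 2 = 0
  · have h1 : ¬ ((t + 1) % 2 = 0) := by omega
    simp [h, h1]
  · have h1 : (t + 1) % 2 = 0 := by omega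
    simp [h, h1, sw_sw]

/-- base-cycle index of the canonical zigzag -/
def jz (c i : ℤ) : ZMod (2 * k) := ((c + 2 * (i / 3) + i % 3 : ℤ) : ZMod (2 * k))

/-- apex index of the canonical zigzag -/
def az (a0 : Fin 2) (i : ℤ) : Fin 2 := aa a0 (i / 3)

lemma jz_shift (c i s : ℤ) : jz (k := k) c (i + 3 * s) = jz (c + 2 * s) i := by
  unfold jz
  rw [show (i + 3 * s) / 3 = i / 3 + s by omega, show (i + 3 * s) % 3 = i % 3 by omega]
  congr 1
  ring

lemma az_shift (a0 : Fin 2) (i s : ℤ) : az a0 (i + 3 * s) = az (aa a0 s) i := by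
  unfold az
  rw [show (i + 3 * s) / 3 = i / 3 + s by omega]
  exact aa_add a0 (i / 3) s

lemma jz_congr {c c' : ℤ} (h : ((c : ℤ) : ZMod (2 * k)) = ((c' : ℤ) : ZMod (2 * k)))
    (i : ℤ) : jz (k := k) c i = jz c' i := by
  unfold jz
  push_cast at h ⊢
  rw [h]

lemma jz_succ0 (c : ℤ) {i : ℤ} (h : i % 3 = 0) : jz (k := k) c (i + 1) = jz c i + 1 := by
  unfold jz
  rw [show (i + 1) / 3 = i / 3 by omega, show (i + 1) % 3 = i % 3 + 1 by omega]
  push_cast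
  ring

lemma jz_succ1 (c : ℤ) {i : ℤ} (h : i % 3 = 1) : jz (k := k) c (i + 1) = jz c i + 1 := by
  unfold jz
  rw [show (i + 1) / 3 = i / 3 by omega, show (i + 1) % 3 = i % 3 + 1 by omega]
  push_cast
  ring

lemma jz_succ2 (c : ℤ) {i : ℤ} (h : i % 3 = 2) : jz (k := k) c (i + 1) = jz c i := by
  unfold jz
  rw [show (i + 1) / 3 = i / 3 + 1 by omega, show (i + 1) % 3 = 0 by omega, h]
  push_cast
  ring

lemma az_succ01 (a0 : Fin 2) {i : ℤ} (h : i % 3 = 0 ∨ i % 3 = 1) :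
    az a0 (i + 1) = az a0 i := by
  unfold az
  rw [show (i + 1) / 3 = i / 3 by omega]

lemma az_succ2 (a0 : Fin 2) {i : ℤ} (h : i % 3 = 2) : az a0 (i + 1) = sw (az a0 i) := by
  unfold az
  rw [show (i + 1) / 3 = i / 3 + 1 by omega]
  exact aa_succ a0 (i / 3)

lemma jz_zero (c : ℤ) : jz (k := k) c 0 = ((c : ℤ) : ZMod (2 * k)) := by
  unfold jz; norm_num

lemma jz_one (c : ℤ) : jz (k := k) c 1 = ((c : ℤ) : ZMod (2 * k)) + 1 := by
  unfold jz
  rw [show (1 : ℤ) / 3 = 0 by decide, show (1 : ℤ) % 3 = 1 by decide]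
  push_cast
  ring

lemma jz_two (c : ℤ) : jz (k := k) c 2 = ((c : ℤ) : ZMod (2 * k)) + 2 := by
  unfold jz
  rw [show (2 : ℤ) / 3 = 0 by decide, show (2 : ℤ) % 3 = 2 by decide]
  push_cast
  ring

lemma az_zero (a0 : Fin 2) : az a0 0 = a0 := by
  unfold az
  norm_num [aa_zero]

lemma az_one (a0 : Fin 2) : az a0 1 = a0 := by
  unfold az
  rw [show (1 : ℤ) / 3 = 0 by decide]
  exact aa_zero a0

lemma az_two (a0 : Fin 2) : az a0 2 = a0 := by
  unfold az
  rw [show (2 : ℤ) / 3 = 0 by decide]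
  exact aa_zero a0

/-- the edges of the canonical zigzags -/
def canEdge (c : ℤ) (a0 : Fin 2) (i : ℤ) : T.E :=
  if i % 3 = 0 then B.be (jz c i) else B.ae (az a0 i) (jz c i)

def canTail (c : ℤ) (a0 : Fin 2) (i : ℤ) : T.V :=
  if i % 3 = 2 then B.apex (az a0 i) else B.base (jz c i)

def canHead (c : ℤ) (a0 : Fin 2) (i : ℤ) : T.V :=
  if i % 3 = 0 then B.base (jz c i + 1)
  else if i % 3 = 1 then B.apex (az a0 i) else B.base (jz c i)

def canFace (c : ℤ) (a0 : Fin 2) (i : ℤ) : T.F := B.fc (az a0 i) (jz c i)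

lemma canEdge_shift (c : ℤ) (a0 : Fin 2) (i s : ℤ) :
    canEdge B c a0 (i + 3 * s) = canEdge B (c + 2 * s) (aa a0 s) i := by
  unfold canEdge
  rw [show (i + 3 * s) % 3 = i % 3 by omega, jz_shift, az_shift]

lemma canTail_shift (c : ℤ) (a0 : Fin 2) (i s : ℤ) :
    canTail B c a0 (i + 3 * s) = canTail B (c + 2 * s) (aa a0 s) i := by
  unfold canTail
  rw [show (i + 3 * s) % 3 = i % 3 by omega, jz_shift, az_shift]

lemma canHead_shift (c : ℤ) (a0 : Fin 2) (i s : ℤ) :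
    canHead B c a0 (i + 3 * s) = canHead B (c + 2 * s) (aa a0 s) i := by
  unfold canHead
  rw [show (i + 3 * s) % 3 = i % 3 by omega, jz_shift, az_shift]

lemma canFace_shift (c : ℤ) (a0 : Fin 2) (i s : ℤ) :
    canFace B c a0 (i + 3 * s) = canFace B (c + 2 * s) (aa a0 s) i := by
  unfold canFace
  rw [jz_shift, az_shift]

lemma canEdge_congr {c c' : ℤ} (h : ((c : ℤ) : ZMod (2 * k)) = ((c' : ℤ) : ZMod (2 * k)))
    (a0 : Fin 2) (i : ℤ) : canEdge B c a0 i = canEdge B c' a0 i := by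
  unfold canEdge
  rw [jz_congr h]

lemma canTail_congr {c c' : ℤ} (h : ((c : ℤ) : ZMod (2 * k)) = ((c' : ℤ) : ZMod (2 * k)))
    (a0 : Fin 2) (i : ℤ) : canTail B c a0 i = canTail B c' a0 i := by
  unfold canTail
  rw [jz_congr h]

lemma canHead_congr {c c' : ℤ} (h : ((c : ℤ) : ZMod (2 * k)) = ((c' : ℤ) : ZMod (2 * k)))
    (a0 : Fin 2) (i : ℤ) : canHead B c a0 i = canHead B c' a0 i := by
  unfold canHead
  rw [jz_congr h]

lemma canFace_congr {c c' : ℤ} (h : ((c : ℤ) : ZMod (2 * k)) = ((c' : ℤ) : ZMod (2 * k)))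
    (a0 : Fin 2) (i : ℤ) : canFace B c a0 i = canFace B c' a0 i := by
  unfold canFace
  rw [jz_congr h]

lemma canEdge_zero (c : ℤ) (a0 : Fin 2) :
    canEdge B c a0 0 = B.be ((c : ℤ) : ZMod (2 * k)) := by
  unfold canEdge
  rw [if_pos (by decide : (0 : ℤ) % 3 = 0), jz_zero]

lemma canEdge_one (c : ℤ) (a0 : Fin 2) :
    canEdge B c a0 1 = B.ae a0 (((c : ℤ) : ZMod (2 * k)) + 1) := by
  unfold canEdge
  rw [if_neg (by decide : ¬ (1 : ℤ) % 3 = 0), jz_one, az_one]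

lemma canEdge_two (c : ℤ) (a0 : Fin 2) :
    canEdge B c a0 2 = B.ae a0 (((c : ℤ) : ZMod (2 * k)) + 2) := by
  unfold canEdge
  rw [if_neg (by decide : ¬ (2 : ℤ) % 3 = 0), jz_two, az_two]

lemma canTail_zero (c : ℤ) (a0 : Fin 2) :
    canTail B c a0 0 = B.base ((c : ℤ) : ZMod (2 * k)) := by
  unfold canTail
  rw [if_neg (by decide : ¬ (0 : ℤ) % 3 = 2), jz_zero]

lemma canTail_one (c : ℤ) (a0 : Fin 2) :
    canTail B c a0 1 = B.base (((c : ℤ) : ZMod (2 * k)) + 1) := by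
  unfold canTail
  rw [if_neg (by decide : ¬ (1 : ℤ) % 3 = 2), jz_one]

lemma canTail_two (c : ℤ) (a0 : Fin 2) : canTail B c a0 2 = B.apex a0 := by
  unfold canTail
  rw [if_pos (by decide : (2 : ℤ) % 3 = 2), az_two]

lemma canHead_zero (c : ℤ) (a0 : Fin 2) :
    canHead B c a0 0 = B.base (((c : ℤ) : ZMod (2 * k)) + 1) := by
  unfold canHead
  rw [if_pos (by decide : (0 : ℤ) % 3 = 0), jz_zero]

lemma canHead_one (c : ℤ) (a0 : Fin 2) : canHead B c a0 1 = B.apex a0 := by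
  unfold canHead
  rw [if_neg (by decide : ¬ (1 : ℤ) % 3 = 0), if_pos (by decide : (1 : ℤ) % 3 = 1), az_one]

lemma canHead_two (c : ℤ) (a0 : Fin 2) :
    canHead B c a0 2 = B.base (((c : ℤ) : ZMod (2 * k)) + 2) := by
  unfold canHead
  rw [if_neg (by decide : ¬ (2 : ℤ) % 3 = 0), if_neg (by decide : ¬ (2 : ℤ) % 3 = 1), jz_two]

lemma canFace_zero (c : ℤ) (a0 : Fin 2) :
    canFace B c a0 0 = B.fc a0 ((c : ℤ) : ZMod (2 * k)) := by
  unfold canFace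
  rw [jz_zero, az_zero]

lemma canFace_one (c : ℤ) (a0 : Fin 2) :
    canFace B c a0 1 = B.fc a0 (((c : ℤ) : ZMod (2 * k)) + 1) := by
  unfold canFace
  rw [jz_one, az_one]

lemma canFace_two (c : ℤ) (a0 : Fin 2) :
    canFace B c a0 2 = B.fc a0 (((c : ℤ) : ZMod (2 * k)) + 2) := by
  unfold canFace
  rw [jz_two, az_two]

/-- the period of the canonical zigzags -/
def perZ (k : ℕ) : ℕ := if k % 2 = 0 then 3 * k else 6 * k

lemma perZ_div3 : (perZ k : ℤ) = 3 * ((perZ k : ℤ) / 3) := by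
  unfold perZ
  split <;> push_cast <;> omega

lemma perZ_even : ((perZ k : ℤ) / 3) % 2 = 0 := by
  unfold perZ
  split <;> push_cast <;> omega

lemma perZ_cast : ((2 * ((perZ k : ℤ) / 3) : ℤ) : ZMod (2 * k)) = 0 := by
  rw [ZMod.intCast_zmod_eq_zero_iff_dvd]
  unfold perZ
  split <;> push_cast
  · exact ⟨1, by omega⟩
  · exact ⟨2, by omega⟩

lemma perZ_ccast (c : ℤ) :
    ((c + 2 * ((perZ k : ℤ) / 3) : ℤ) : ZMod (2 * k)) = ((c : ℤ) : ZMod (2 * k)) := by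
  have h0 := perZ_cast (k := k)
  push_cast at h0 ⊢
  rw [h0, add_zero]


/-- the canonical zigzags of the bipyramid -/
def Zcan (hk : 2 ≤ k) (c : ℤ) (a0 : Fin 2) : Zigzag T where
  n := perZ k
  npos := by unfold perZ; split <;> omega
  edge := canEdge B c a0
  tail := canTail B c a0
  head := canHead B c a0
  face := canFace B c a0
  per_edge i := by
    show canEdge B c a0 (i + (perZ k : ℤ)) = canEdge B c a0 i
    rw [show i + (perZ k : ℤ) = i + 3 * ((perZ k : ℤ) / 3) from by rw [← perZ_div3],
      canEdge_shift, aa_even a0 perZ_even]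
    exact canEdge_congr B (perZ_ccast c) a0 i
  per_tail i := by
    show canTail B c a0 (i + (perZ k : ℤ)) = canTail B c a0 i
    rw [show i + (perZ k : ℤ) = i + 3 * ((perZ k : ℤ) / 3) from by rw [← perZ_div3],
      canTail_shift, aa_even a0 perZ_even]
    exact canTail_congr B (perZ_ccast c) a0 i
  per_head i := by
    show canHead B c a0 (i + (perZ k : ℤ)) = canHead B c a0 i
    rw [show i + (perZ k : ℤ) = i + 3 * ((perZ k : ℤ) / 3) from by rw [← perZ_div3],
      canHead_shift, aa_even a0 perZ_even]
    exact canHead_congr B (perZ_ccast c) a0 i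
  per_face i := by
    show canFace B c a0 (i + (perZ k : ℤ)) = canFace B c a0 i
    rw [show i + (perZ k : ℤ) = i + 3 * ((perZ k : ℤ) / 3) from by rw [← perZ_div3],
      canFace_shift, aa_even a0 perZ_even]
    exact canFace_congr B (perZ_ccast c) a0 i
  mem_tail i := by
    show canTail B c a0 i ∈ T.ends (canEdge B c a0 i)
    have hr : i % 3 = 0 ∨ i % 3 = 1 ∨ i % 3 = 2 := by omega
    unfold canTail canEdge
    rcases hr with h | h | h <;> simp [h, mem_ends_be B, mem_ends_ae B]
  mem_head i := by
    show canHead B c a0 i ∈ T.ends (canEdge B c a0 i)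
    have hr : i % 3 = 0 ∨ i % 3 = 1 ∨ i % 3 = 2 := by omega
    unfold canHead canEdge
    rcases hr with h | h | h <;> simp [h, mem_ends_be B, mem_ends_ae B]
  tail_ne_head i := by
    show canTail B c a0 i ≠ canHead B c a0 i
    obtain ⟨z1, z2, z3, z4, z5, z6⟩ := zfacts (k := k) hk
    have hr : i % 3 = 0 ∨ i % 3 = 1 ∨ i % 3 = 2 := by omega
    unfold canTail canHead
    rcases hr with h | h | h <;>
      simp [h, B.base_inj.eq_iff, B.apex_ne_base, base_ne_apex B, left_eq_add, z1]
  link i := by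
    show canHead B c a0 i = canTail B c a0 (i + 1)
    have hr : i % 3 = 0 ∨ i % 3 = 1 ∨ i % 3 = 2 := by omega
    unfold canHead canTail
    rcases hr with h | h | h
    · rw [if_pos h, if_neg (show ¬ (i + 1) % 3 = 2 by omega), jz_succ0 c h]
    · rw [if_neg (show ¬ i % 3 = 0 by omega), if_pos h,
        if_pos (show (i + 1) % 3 = 2 by omega), az_succ01 a0 (Or.inr h)]
    · rw [if_neg (show ¬ i % 3 = 0 by omega), if_neg (show ¬ i % 3 = 1 by omega),
        if_neg (show ¬ (i + 1) % 3 = 2 by omega), jz_succ2 c h]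
  edge_mem i := by
    show canEdge B c a0 i ∈ T.sides (canFace B c a0 i)
    have hr : i % 3 = 0 ∨ i % 3 = 1 ∨ i % 3 = 2 := by omega
    unfold canEdge canFace
    rcases hr with h | h | h <;> rw [mem_sides_fc B] <;> simp [h]
  edge_succ_mem i := by
    show canEdge B c a0 (i + 1) ∈ T.sides (canFace B c a0 i)
    have hr : i % 3 = 0 ∨ i % 3 = 1 ∨ i % 3 = 2 := by omega
    unfold canEdge canFace
    rcases hr with h | h | h
    · rw [if_neg (show ¬ (i + 1) % 3 = 0 by omega), jz_succ0 c h,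
        az_succ01 a0 (Or.inl h), mem_sides_fc B]
      tauto
    · rw [if_neg (show ¬ (i + 1) % 3 = 0 by omega), jz_succ1 c h,
        az_succ01 a0 (Or.inr h), mem_sides_fc B]
      tauto
    · rw [if_pos (show (i + 1) % 3 = 0 by omega), jz_succ2 c h, mem_sides_fc B]
      tauto
  edge_ne_succ i := by
    show canEdge B c a0 i ≠ canEdge B c a0 (i + 1)
    obtain ⟨z1, -, -, -, -, -⟩ := zfacts (k := k) hk
    have hr : i % 3 = 0 ∨ i % 3 = 1 ∨ i % 3 = 2 := by omega
    unfold canEdge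
    rcases hr with h | h | h
    · rw [if_pos h, if_neg (show ¬ (i + 1) % 3 = 0 by omega)]
      exact be_ne_ae B
    · rw [if_neg (show ¬ i % 3 = 0 by omega), if_neg (show ¬ (i + 1) % 3 = 0 by omega),
        jz_succ1 c h, az_succ01 a0 (Or.inr h)]
      intro hq
      obtain ⟨-, hj⟩ := ae_inj B hq
      exact z1 (by rwa [left_eq_add] at hj)
    · rw [if_neg (show ¬ i % 3 = 0 by omega), if_pos (show (i + 1) % 3 = 0 by omega)]
      exact fun hq => be_ne_ae B hq.symm
  face_ne_succ i := by
    show canFace B c a0 i ≠ canFace B c a0 (i + 1)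
    obtain ⟨z1, -, -, -, -, -⟩ := zfacts (k := k) hk
    have hr : i % 3 = 0 ∨ i % 3 = 1 ∨ i % 3 = 2 := by omega
    unfold canFace
    rcases hr with h | h | h
    · rw [jz_succ0 c h, az_succ01 a0 (Or.inl h)]
      intro hq
      obtain ⟨-, hj⟩ := fc_inj B hq
      exact z1 (by rwa [left_eq_add] at hj)
    · rw [jz_succ1 c h, az_succ01 a0 (Or.inr h)]
      intro hq
      obtain ⟨-, hj⟩ := fc_inj B hq
      exact z1 (by rwa [left_eq_add] at hj)
    · rw [jz_succ2 c h, az_succ2 a0 h]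
      intro hq
      obtain ⟨ha, -⟩ := fc_inj B hq
      exact sw_ne (az a0 i) ha.symm
  disjoint_two i := by
    show T.ends (canEdge B c a0 i) ∩ T.ends (canEdge B c a0 (i + 2)) = ∅
    obtain ⟨z1, z2, z3, z4, z5, z6⟩ := zfacts (k := k) hk
    have ne_sw : ∀ x : Fin 2, x ≠ sw x := fun x h => sw_ne x h.symm
    have e22 : ∀ x : ZMod (2 * k), x + 1 + 1 = x + 2 := fun x => by ring
    have hr : i % 3 = 0 ∨ i % 3 = 1 ∨ i % 3 = 2 := by omega
    unfold canEdge
    have e2 : i + 2 = (i + 1) + 1 := by ring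
    rcases hr with h | h | h
    · rw [if_pos h, if_neg (show ¬ (i + 2) % 3 = 0 by omega), e2,
        jz_succ1 c (show (i + 1) % 3 = 1 by omega), jz_succ0 c h,
        az_succ01 a0 (Or.inr (show (i + 1) % 3 = 1 by omega)), az_succ01 a0 (Or.inl h)]
      apply Finset.eq_empty_iff_forall_notMem.mpr
      intro v hv
      rw [Finset.mem_inter, mem_ends_be B, mem_ends_ae B] at hv
      obtain ⟨h1 | h1, h2 | h2⟩ := hv <;> subst h1 <;>
        simp_all [B.base_inj.eq_iff, B.apex_ne_base, base_ne_apex B, e22,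
          left_eq_add, add_right_inj, z1, z2, z4]
    · rw [if_neg (show ¬ i % 3 = 0 by omega), if_pos (show (i + 2) % 3 = 0 by omega), e2,
        jz_succ2 c (show (i + 1) % 3 = 2 by omega), jz_succ1 c h]
      apply Finset.eq_empty_iff_forall_notMem.mpr
      intro v hv
      rw [Finset.mem_inter, mem_ends_ae B, mem_ends_be B] at hv
      obtain ⟨h1 | h1, h2 | h2⟩ := hv <;> subst h1 <;>
        simp_all [B.base_inj.eq_iff, B.apex_ne_base, base_ne_apex B, e22,
          left_eq_add, add_right_inj, z1, z2, z4]
    · rw [if_neg (show ¬ i % 3 = 0 by omega), if_neg (show ¬ (i + 2) % 3 = 0 by omega), e2,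
        jz_succ0 c (show (i + 1) % 3 = 0 by omega), jz_succ2 c h,
        az_succ01 a0 (Or.inl (show (i + 1) % 3 = 0 by omega)), az_succ2 a0 h]
      apply Finset.eq_empty_iff_forall_notMem.mpr
      intro v hv
      rw [Finset.mem_inter, mem_ends_ae B, mem_ends_ae B] at hv
      obtain ⟨h1 | h1, h2 | h2⟩ := hv <;> subst h1 <;>
        simp_all [B.base_inj.eq_iff, B.apex_inj.eq_iff, B.apex_ne_base, base_ne_apex B, e22,
          ne_sw, left_eq_add, add_right_inj, z1, z2, z4] <;>
        exact absurd h2.symm (sw_ne _)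
  minimal m hm hper := by
    obtain ⟨z1, -, -, -, -, -⟩ := zfacts (k := k) hk
    have hper' : ∀ i : ℤ, canEdge B c a0 (i + (m : ℤ)) = canEdge B c a0 i := hper
    have hm3 : (m : ℤ) % 3 = 0 := by
      by_contra hc
      have h0 := hper' 0
      unfold canEdge at h0
      rw [if_neg (show ¬ ((0 : ℤ) + (m : ℤ)) % 3 = 0 by omega),
        if_pos (show (0 : ℤ) % 3 = 0 by decide)] at h0
      exact be_ne_ae B h0.symm
    set s : ℤ := (m : ℤ) / 3 with hs
    have hms : (m : ℤ) = 3 * s := by omega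
    have h0 := hper' 0
    rw [show (0 : ℤ) + (m : ℤ) = 0 + 3 * s from by omega, canEdge_shift,
      canEdge_zero, canEdge_zero] at h0
    have hcast : ((c + 2 * s : ℤ) : ZMod (2 * k)) = ((c : ℤ) : ZMod (2 * k)) := be_inj B h0
    have h1 := hper' 1
    rw [show (1 : ℤ) + (m : ℤ) = 1 + 3 * s from by omega, canEdge_shift,
      canEdge_one, canEdge_one] at h1
    obtain ⟨haa, -⟩ := ae_inj B h1
    have hs2 : s % 2 = 0 := aa_eq_self haa
    have hdvd : (2 * (k : ℤ)) ∣ 2 * s := by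
      have h2 : ((c + 2 * s : ℤ) : ZMod (2 * k)) - ((c : ℤ) : ZMod (2 * k)) = 0 := by
        rw [hcast]; ring
      have h3 : ((2 * s : ℤ) : ZMod (2 * k)) = 0 := by
        push_cast at h2 ⊢
        linear_combination h2
      have h4 := (ZMod.intCast_zmod_eq_zero_iff_dvd _ _).mp h3
      push_cast at h4
      exact h4
    obtain ⟨t, ht⟩ := hdvd
    have ht' : 2 * s = 2 * ((k : ℤ) * t) := by linear_combination ht
    have hskt : s = (k : ℤ) * t := by omega
    have hspos : 0 < s := by omega
    have htpos : 0 < t := by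
      by_contra hc
      push_neg at hc
      have : (k : ℤ) * t ≤ 0 :=
        mul_nonpos_iff.mpr (Or.inl ⟨by positivity, hc⟩)
      omega
    rcases Nat.even_or_odd k with hke | hko
    · have hke' : k % 2 = 0 := Nat.even_iff.mp hke
      have hkt : (k : ℤ) ≤ s := Int.le_of_dvd hspos ⟨t, hskt⟩
      unfold perZ
      rw [if_pos hke']
      omega
    · have hko' : k % 2 = 1 := Nat.odd_iff.mp hko
      have hko'' : (k : ℤ) % 2 = 1 := by omega
      have hp := Int.mul_emod (k : ℤ) t 2
      rw [hko'', one_mul] at hp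
      have ht2 : t % 2 = 0 := by omega
      have ht2' : 2 ≤ t := by omega
      have : (k : ℤ) * 2 ≤ (k : ℤ) * t :=
        mul_le_mul_of_nonneg_left ht2' (by positivity)
      unfold perZ
      rw [if_neg (by omega)]
      omega

@[simp] lemma Zcan_edge (hk : 2 ≤ k) (c : ℤ) (a0 : Fin 2) :
    (Zcan B hk c a0).edge = canEdge B c a0 := rfl
@[simp] lemma Zcan_tail (hk : 2 ≤ k) (c : ℤ) (a0 : Fin 2) :
    (Zcan B hk c a0).tail = canTail B c a0 := rfl
@[simp] lemma Zcan_head (hk : 2 ≤ k) (c : ℤ) (a0 : Fin 2) :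
    (Zcan B hk c a0).head = canHead B c a0 := rfl
@[simp] lemma Zcan_face (hk : 2 ≤ k) (c : ℤ) (a0 : Fin 2) :
    (Zcan B hk c a0).face = canFace B c a0 := rfl


include B in
lemma classify (hk : 2 ≤ k) (Z : Zigzag T) :
    (∃ (c : ℤ) (a0 : Fin 2) (r : ℤ), StEq Z (Zcan B hk c a0) 0 r) ∨
      (∃ (c : ℤ) (a0 : Fin 2) (r : ℤ), StEq (Zrev Z) (Zcan B hk c a0) 0 r) := by
  obtain ⟨z1, z2, z3, z4, z5, z6⟩ := zfacts (k := k) hk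
  haveI : NeZero (2 * k) := ⟨by omega⟩
  have hval : ∀ x : ZMod (2 * k), (((x.val : ℤ)) : ZMod (2 * k)) = x := by
    intro x
    push_cast
    exact ZMod.natCast_rightInverse x
  have hfm1 : Z.edge 0 ∈ T.sides (Z.face (-1)) := by
    have h := Z.edge_succ_mem (-1)
    norm_num at h
    exact h
  have hfne : Z.face (-1) ≠ Z.face 0 := by
    have h := Z.face_ne_succ (-1)
    norm_num at h
    exact h
  have hrz : (-(0 : ℤ) - 1) = -1 := by norm_num
  rcases B.edge_surj (Z.edge 0) with ⟨j, hj⟩ | ⟨a, m, hj⟩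
  · obtain ⟨a, hfa⟩ := be_mem_face B (by rw [← hj]; exact Z.edge_mem 0)
    have htl := Z.mem_tail 0
    have hhd := Z.mem_head 0
    rw [hj, mem_ends_be B] at htl hhd
    have hth := Z.tail_ne_head 0
    rcases htl with ht | ht <;> rcases hhd with hh | hh
    · exact absurd (ht.trans hh.symm) hth
    · left
      refine ⟨(j.val : ℤ), a, 0, ?_, ?_, ?_, ?_⟩
      · rw [Zcan_edge, canEdge_zero, hval, hj]
      · rw [Zcan_tail, canTail_zero, hval, ht]
      · rw [Zcan_head, canHead_zero, hval, hh]
      · rw [Zcan_face, canFace_zero, hval, hfa]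
    · right
      obtain ⟨a', hfa'⟩ := be_mem_face B (by rw [← hj]; exact hfm1)
      refine ⟨(j.val : ℤ), a', 0, ?_, ?_, ?_, ?_⟩
      · rw [Zrev_edge, neg_zero, Zcan_edge, canEdge_zero, hval, hj]
      · rw [Zrev_tail, neg_zero, Zcan_tail, canTail_zero, hval, hh]
      · rw [Zrev_head, neg_zero, Zcan_head, canHead_zero, hval, ht]
      · rw [Zrev_face, hrz, Zcan_face, canFace_zero, hval, hfa']
    · exact absurd (ht.trans hh.symm) hth
  · have hfcne : B.fc a m ≠ B.fc a (m - 1) := by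
      intro hq
      obtain ⟨-, hq2⟩ := fc_inj B hq
      exact z1 (by linear_combination hq2)
    have em1 : (((m - 1).val : ℤ) : ZMod (2 * k)) + 1 = m := by
      rw [hval]; ring
    have em2 : (((m - 2).val : ℤ) : ZMod (2 * k)) + 2 = m := by
      rw [hval]; ring
    have hfc := ae_mem_face B (by rw [← hj]; exact Z.edge_mem 0)
    have htl := Z.mem_tail 0
    have hhd := Z.mem_head 0
    rw [hj, mem_ends_ae B] at htl hhd
    have hth := Z.tail_ne_head 0
    rcases htl with ht | ht <;> rcases hhd with hh | hh
    · exact absurd (ht.trans hh.symm) hth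
    · -- tail = apex a, head = base m
      rcases hfc with hf | hf
      · left
        refine ⟨((m - 2).val : ℤ), a, 2, ?_, ?_, ?_, ?_⟩
        · rw [Zcan_edge, canEdge_two, em2, hj]
        · rw [Zcan_tail, canTail_two, ht]
        · rw [Zcan_head, canHead_two, em2, hh]
        · rw [Zcan_face, canFace_two, em2, hf]
      · right
        have hfr : Z.face (-1) = B.fc a m := by
          rcases ae_mem_face B (by rw [← hj]; exact hfm1) with h' | h'
          · exact h'
          · exact absurd (h'.trans (hf.symm)) hfne
        refine ⟨((m - 1).val : ℤ), a, 1, ?_, ?_, ?_, ?_⟩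
        · rw [Zrev_edge, neg_zero, Zcan_edge, canEdge_one, em1, hj]
        · rw [Zrev_tail, neg_zero, Zcan_tail, canTail_one, em1, hh]
        · rw [Zrev_head, neg_zero, Zcan_head, canHead_one, ht]
        · rw [Zrev_face, hrz, Zcan_face, canFace_one, em1, hfr]
    · -- tail = base m, head = apex a
      rcases hfc with hf | hf
      · left
        refine ⟨((m - 1).val : ℤ), a, 1, ?_, ?_, ?_, ?_⟩
        · rw [Zcan_edge, canEdge_one, em1, hj]
        · rw [Zcan_tail, canTail_one, em1, ht]
        · rw [Zcan_head, canHead_one, hh]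
        · rw [Zcan_face, canFace_one, em1, hf]
      · right
        have hfr : Z.face (-1) = B.fc a m := by
          rcases ae_mem_face B (by rw [← hj]; exact hfm1) with h' | h'
          · exact h'
          · exact absurd (h'.trans (hf.symm)) hfne
        refine ⟨((m - 2).val : ℤ), a, 2, ?_, ?_, ?_, ?_⟩
        · rw [Zrev_edge, neg_zero, Zcan_edge, canEdge_two, em2, hj]
        · rw [Zrev_tail, neg_zero, Zcan_tail, canTail_two, hh]
        · rw [Zrev_head, neg_zero, Zcan_head, canHead_two, em2, ht]
        · rw [Zrev_face, hrz, Zcan_face, canFace_two, em2, hfr]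
    · exact absurd (ht.trans hh.symm) hth

include B in
lemma reach (hk : 2 ≤ k) (Z : Zigzag T) {c : ℤ} {a0 : Fin 2} {r : ℤ}
    (hst : StEq Z (Zcan B hk c a0) 0 r) (s : ℤ) {c' : ℤ} {a' : Fin 2}
    (hc : ((c + 2 * s : ℤ) : ZMod (2 * k)) = ((c' : ℤ) : ZMod (2 * k)))
    (ha : aa a0 s = a') : CyclicEq Z (Zcan B hk c' a') := by
  have hall := stEq_all B hk hst
  refine ⟨3 * s - r, ?_, ?_, ?_⟩
  · intro i
    obtain ⟨he, -, -, -⟩ := hall (i + (3 * s - r))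
    rw [show i + (3 * s - r) + r = i + 3 * s from by ring] at he
    rw [Zcan_edge] at he ⊢
    rw [he, canEdge_shift, ha]
    exact (canEdge_congr B hc a' i).symm
  · intro i
    obtain ⟨-, ht, -, -⟩ := hall (i + (3 * s - r))
    rw [show i + (3 * s - r) + r = i + 3 * s from by ring] at ht
    rw [Zcan_tail] at ht ⊢
    rw [ht, canTail_shift, ha]
    exact (canTail_congr B hc a' i).symm
  · intro i
    obtain ⟨-, -, hh, -⟩ := hall (i + (3 * s - r))
    rw [show i + (3 * s - r) + r = i + 3 * s from by ring] at hh
    rw [Zcan_head] at hh ⊢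
    rw [hh, canHead_shift, ha]
    exact (canHead_congr B hc a' i).symm

include B in
lemma reach_rev (hk : 2 ≤ k) (Z : Zigzag T) {c : ℤ} {a0 : Fin 2} {r : ℤ}
    (hst : StEq (Zrev Z) (Zcan B hk c a0) 0 r) (s : ℤ) {c' : ℤ} {a' : Fin 2}
    (hc : ((c + 2 * s : ℤ) : ZMod (2 * k)) = ((c' : ℤ) : ZMod (2 * k)))
    (ha : aa a0 s = a') : IsReversal Z (Zcan B hk c' a') := by
  have hall := stEq_all B hk hst
  refine ⟨r - 3 * s, ?_, ?_, ?_⟩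
  · intro i
    obtain ⟨he, -, -, -⟩ := hall (i + (3 * s - r))
    rw [show i + (3 * s - r) + r = i + 3 * s from by ring] at he
    rw [Zrev_edge, show -(i + (3 * s - r)) = (r - 3 * s) - i from by ring] at he
    rw [Zcan_edge] at he ⊢
    rw [he, canEdge_shift, ha]
    exact (canEdge_congr B hc a' i).symm
  · intro i
    obtain ⟨-, ht, -, -⟩ := hall (i + (3 * s - r))
    rw [show i + (3 * s - r) + r = i + 3 * s from by ring] at ht
    rw [Zrev_tail, show -(i + (3 * s - r)) = (r - 3 * s) - i from by ring] at ht
    rw [Zcan_tail] at ht ⊢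
    rw [ht, canTail_shift, ha]
    exact (canTail_congr B hc a' i).symm
  · intro i
    obtain ⟨-, -, hh, -⟩ := hall (i + (3 * s - r))
    rw [show i + (3 * s - r) + r = i + 3 * s from by ring] at hh
    rw [Zrev_head, show -(i + (3 * s - r)) = (r - 3 * s) - i from by ring] at hh
    rw [Zcan_head] at hh ⊢
    rw [hh, canHead_shift, ha]
    exact (canHead_congr B hc a' i).symm

include B in
lemma cyc_params (hk : 2 ≤ k) {c c' : ℤ} {a a' : Fin 2}
    (h : CyclicEq (Zcan B hk c a) (Zcan B hk c' a')) :
    ∃ s : ℤ, ((c + 2 * s : ℤ) : ZMod (2 * k)) = ((c' : ℤ) : ZMod (2 * k)) ∧ aa a s = a' := by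
  obtain ⟨κ, he, -, -⟩ := h
  have h0 := he 0
  rw [Zcan_edge, Zcan_edge, canEdge_zero, show (0 : ℤ) + κ = κ from by ring] at h0
  have hk3 : κ % 3 = 0 := by
    by_contra hc'
    unfold canEdge at h0
    rw [if_neg hc'] at h0
    exact be_ne_ae B h0
  set s : ℤ := κ / 3 with hs
  rw [show κ = 0 + 3 * s from by omega, canEdge_shift, canEdge_zero] at h0
  have hcc : ((c + 2 * s : ℤ) : ZMod (2 * k)) = ((c' : ℤ) : ZMod (2 * k)) :=
    (be_inj B h0).symm
  have h1 := he 1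
  rw [Zcan_edge, Zcan_edge, canEdge_one, show (1 : ℤ) + κ = 1 + 3 * s from by omega,
    canEdge_shift, canEdge_one] at h1
  obtain ⟨ha, -⟩ := ae_inj B h1
  exact ⟨s, hcc, ha.symm⟩

include B in
lemma no_rev (hk : 2 ≤ k) (c : ℤ) (a : Fin 2) (c' : ℤ) (a' : Fin 2) :
    ¬ IsReversal (Zcan B hk c a) (Zcan B hk c' a') := by
  obtain ⟨z1, -, -, -, -, -⟩ := zfacts (k := k) hk
  rintro ⟨κ, he, ht, -⟩
  have h0 := he 0
  rw [Zcan_edge, Zcan_edge, canEdge_zero, show κ - (0 : ℤ) = κ from by ring] at h0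
  have hk3 : κ % 3 = 0 := by
    by_contra hc'
    unfold canEdge at h0
    rw [if_neg hc'] at h0
    exact be_ne_ae B h0
  set s : ℤ := κ / 3 with hs
  rw [show κ = 0 + 3 * s from by omega, canEdge_shift, canEdge_zero] at h0
  have hcc := be_inj B h0
  have ht0 := ht 0
  rw [Zcan_tail, Zcan_head, canTail_zero, show κ - (0 : ℤ) = 0 + 3 * s from by omega,
    canHead_shift, canHead_zero] at ht0
  have hbb := B.base_inj ht0
  rw [← hcc] at hbb
  exact z1 (by rwa [left_eq_add] at hbb)

lemma parity_contra {c s c' : ℤ}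
    (hc : ((c + 2 * s : ℤ) : ZMod (2 * k)) = ((c' : ℤ) : ZMod (2 * k)))
    (hpar : ¬ c % 2 = c' % 2) : False := by
  have h2 : (2 : ℕ) ∣ 2 * k := ⟨k, rfl⟩
  have h3 := congrArg (ZMod.castHom h2 (ZMod 2)) hc
  rw [map_intCast, map_intCast, ZMod.intCast_eq_intCast_iff'] at h3
  push_cast at h3
  omega

lemma a_contra (hke : k % 2 = 0) {c s : ℤ} {a a' : Fin 2}
    (hc : ((c + 2 * s : ℤ) : ZMod (2 * k)) = ((c : ℤ) : ZMod (2 * k)))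
    (ha : aa a s = a') (hne : a ≠ a') : False := by
  have h3 : ((2 * s : ℤ) : ZMod (2 * k)) = 0 := by
    have h2 : ((c + 2 * s : ℤ) : ZMod (2 * k)) - ((c : ℤ) : ZMod (2 * k)) = 0 := by
      rw [hc]; ring
    push_cast at h2 ⊢
    linear_combination h2
  have h4 := (ZMod.intCast_zmod_eq_zero_iff_dvd _ _).mp h3
  push_cast at h4
  obtain ⟨t, ht⟩ := h4
  have ht' : 2 * s = 2 * ((k : ℤ) * t) := by linear_combination ht
  have hskt : s = (k : ℤ) * t := by omega
  obtain ⟨u, hu⟩ : ∃ u : ℤ, (k : ℤ) = 2 * u := ⟨(k : ℤ) / 2, by omega⟩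
  have hs2 : s % 2 = 0 := by
    have hsu : s = 2 * (u * t) := by rw [hskt, hu]; ring
    omega
  rw [aa_even a hs2] at ha
  exact hne ha

lemma pick_even_cast (c : ℤ) :
    ((c + 2 * ((c % 2 - c) / 2) : ℤ) : ZMod (2 * k)) = ((c % 2 : ℤ) : ZMod (2 * k)) := by
  rw [ZMod.intCast_eq_intCast_iff]
  have h : c % 2 - (c + 2 * ((c % 2 - c) / 2)) = ((2 * k : ℕ) : ℤ) * 0 := by
    push_cast
    omega
  exact Int.modEq_iff_dvd.mpr ⟨0, h⟩

lemma pick_odd (hko : k % 2 = 1) (c : ℤ) (a0 : Fin 2) :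
    ∃ s : ℤ, ((c + 2 * s : ℤ) : ZMod (2 * k)) = ((c % 2 : ℤ) : ZMod (2 * k)) ∧
      aa a0 s = 0 := by
  set s0 : ℤ := (c % 2 - c) / 2 with hs0
  set u : ℤ := ((a0.val : ℤ) - s0) % 2 with hu
  have h1 : 2 * s0 = c % 2 - c := by omega
  refine ⟨s0 + (k : ℤ) * u, ?_, ?_⟩
  · rw [ZMod.intCast_eq_intCast_iff]
    have hdiff : c % 2 - (c + 2 * (s0 + (k : ℤ) * u)) = ((2 * k : ℕ) : ℤ) * (-u) := by
      push_cast
      linear_combination -h1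
    exact Int.modEq_iff_dvd.mpr ⟨-u, hdiff⟩
  · have hmu : ((k : ℤ) * u) % 2 = u % 2 := by
      rw [Int.mul_emod, show ((k : ℤ) % 2) = 1 from by omega, one_mul,
        Int.emod_emod_of_dvd u (dvd_refl 2)]
    have hv := a0.isLt
    have hs2 : (s0 + (k : ℤ) * u) % 2 = (a0.val : ℤ) % 2 := by
      generalize (k : ℤ) * u = w at hmu ⊢
      omega
    unfold aa
    by_cases ha0 : a0 = 0
    · rw [if_pos (by subst ha0; simp at hs2; omega)]
      exact ha0
    · have ha1 : a0 = 1 := by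
        have : a0.val ≠ 0 := fun hq => ha0 (Fin.ext (by simpa using hq))
        exact Fin.ext (by simp; omega)
      rw [if_neg (by subst ha1; simp at hs2; omega)]
      subst ha1
      decide


end Main

end BPZ

/-- For `n = 2k` with `k` odd, `BP_n` has exactly two zigzags up to reversal;
for `n = 2k` with `k` even it has exactly four. -/
theorem stmt_9 (T : Triang) (k : ℕ) (hk : 2 ≤ k) (B : Bipyramid T (2 * k)) :
    (Odd k → ZigzagClasses T 2) ∧ (Even k → ZigzagClasses T 4) := by
  have hfin2 : ∀ x : Fin 2, x = 0 ∨ x = 1 := by decide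
  constructor
  · intro hodd
    have hko : k % 2 = 1 := Nat.odd_iff.mp hodd
    refine ⟨![BPZ.Zcan B hk 0 0, BPZ.Zcan B hk 1 0], ?_, ?_⟩
    · intro j j' hne
      constructor
      · intro hcyc
        fin_cases j <;> fin_cases j' <;>
          simp only [Fin.isValue, Matrix.cons_val_zero, Matrix.cons_val_one,
            Matrix.head_cons] at hcyc <;>
          first
          | exact hne rfl
          | (obtain ⟨s, hc, -⟩ := BPZ.cyc_params B hk hcyc
             exact BPZ.parity_contra hc (by decide))
      · intro hrev
        fin_cases j <;> fin_cases j' <;>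
          simp only [Fin.isValue, Matrix.cons_val_zero, Matrix.cons_val_one,
            Matrix.head_cons] at hrev <;>
          first
          | exact hne rfl
          | exact BPZ.no_rev B hk _ _ _ _ hrev
    · intro Z
      rcases BPZ.classify B hk Z with ⟨c, a0, r, hst⟩ | ⟨c, a0, r, hst⟩
      · obtain ⟨s, hc, ha⟩ := BPZ.pick_odd hko c a0
        have hp : c % 2 = 0 ∨ c % 2 = 1 := by omega
        rcases hp with hp | hp <;> rw [hp] at hc
        · exact ⟨0, Or.inl (BPZ.reach B hk Z hst s hc ha)⟩
        · exact ⟨1, Or.inl (BPZ.reach B hk Z hst s hc ha)⟩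
      · obtain ⟨s, hc, ha⟩ := BPZ.pick_odd hko c a0
        have hp : c % 2 = 0 ∨ c % 2 = 1 := by omega
        rcases hp with hp | hp <;> rw [hp] at hc
        · exact ⟨0, Or.inr (BPZ.reach_rev B hk Z hst s hc ha)⟩
        · exact ⟨1, Or.inr (BPZ.reach_rev B hk Z hst s hc ha)⟩
  · intro heven
    have hke : k % 2 = 0 := Nat.even_iff.mp heven
    refine ⟨![BPZ.Zcan B hk 0 0, BPZ.Zcan B hk 0 1, BPZ.Zcan B hk 1 0,
      BPZ.Zcan B hk 1 1], ?_, ?_⟩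
    · intro j j' hne
      constructor
      · intro hcyc
        fin_cases j <;> fin_cases j' <;>
          simp only [Fin.isValue, Matrix.cons_val_zero, Matrix.cons_val_one,
            Matrix.head_cons, Matrix.cons_val_two, Matrix.tail_cons,
            Matrix.cons_val_three] at hcyc <;>
          first
          | exact hne rfl
          | (obtain ⟨s, hc, ha⟩ := BPZ.cyc_params B hk hcyc
             first
             | exact BPZ.parity_contra hc (by decide)
             | exact BPZ.a_contra hke hc ha (by decide))
      · intro hrev
        fin_cases j <;> fin_cases j' <;>
          simp only [Fin.isValue, Matrix.cons_val_zero, Matrix.cons_val_one,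
            Matrix.head_cons, Matrix.cons_val_two, Matrix.tail_cons,
            Matrix.cons_val_three] at hrev <;>
          first
          | exact hne rfl
          | exact BPZ.no_rev B hk _ _ _ _ hrev
    · intro Z
      rcases BPZ.classify B hk Z with ⟨c, a0, r, hst⟩ | ⟨c, a0, r, hst⟩
      · have hc := BPZ.pick_even_cast (k := k) c
        have hp : c % 2 = 0 ∨ c % 2 = 1 := by omega
        rcases hp with hp | hp <;>
          rcases hfin2 (BPZ.aa a0 ((c % 2 - c) / 2)) with ha | ha <;>
          rw [hp] at hc ha
        · refine ⟨0, Or.inl ?_⟩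
          simp only [Matrix.cons_val_zero]
          exact BPZ.reach B hk Z hst _ hc ha
        · refine ⟨1, Or.inl ?_⟩
          simp only [Matrix.cons_val_one, Matrix.head_cons]
          exact BPZ.reach B hk Z hst _ hc ha
        · refine ⟨2, Or.inl ?_⟩
          simp only [Matrix.cons_val_two, Matrix.tail_cons, Matrix.head_cons]
          exact BPZ.reach B hk Z hst _ hc ha
        · refine ⟨3, Or.inl ?_⟩
          simp only [Matrix.cons_val_three, Matrix.tail_cons, Matrix.head_cons]
          exact BPZ.reach B hk Z hst _ hc ha
      · have hc := BPZ.pick_even_cast (k := k) c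
        have hp : c % 2 = 0 ∨ c % 2 = 1 := by omega
        rcases hp with hp | hp <;>
          rcases hfin2 (BPZ.aa a0 ((c % 2 - c) / 2)) with ha | ha <;>
          rw [hp] at hc ha
        · refine ⟨0, Or.inr ?_⟩
          simp only [Matrix.cons_val_zero]
          exact BPZ.reach_rev B hk Z hst _ hc ha
        · refine ⟨1, Or.inr ?_⟩
          simp only [Matrix.cons_val_one, Matrix.head_cons]
          exact BPZ.reach_rev B hk Z hst _ hc ha
        · refine ⟨2, Or.inr ?_⟩
          simp only [Matrix.cons_val_two, Matrix.tail_cons, Matrix.head_cons]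
          exact BPZ.reach_rev B hk Z hst _ hc ha
        · refine ⟨3, Or.inr ?_⟩
          simp only [Matrix.cons_val_three, Matrix.tail_cons, Matrix.head_cons]
          exact BPZ.reach_rev B hk Z hst _ hc ha
end
end
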